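/- arXiv:1811.04572 — 8 statements merged into one kernel-verified Lean document; each statement's English description precedes it below -/
import Mathlib

section
/- Let H be a real Hilbert space and P a non-empty self-dual cone in H (i.e., P equals its dual cone {ψ : ⟨ψ,φ⟩ ≥ 0 for all φ ∈ P}). Then every φ ∈ H admits a unique decomposition φ = φ₊ − φ₋ with φ₊, φ₋ ∈ P and ⟨φ₊, φ₋⟩ = 0. Moreover φ₊ is the metric projection of φ onto P and φ₋ is the metric projection of −φ onto P. -/
/-!
If `v` is the nearest point of `φ` in the closed convex cone `P`, the variational inequality
`⟪φ - v, w - v⟫ ≤ 0` tested at `w = 2v` and `w = v / 2` gives `⟪φ - v, v⟫ = 0`, hence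
`⟪v - φ, w⟫ ≥ 0` on `P`. Self-duality puts `v - φ` in `P`, so `φ = v - (v - φ)` is a decomposition.
Conversely, for any decomposition `φ = a - b` the expansion
`‖φ - ψ‖² = ‖a - ψ‖² + 2⟪ψ, b⟫ + ‖b‖²` shows that `a` is the nearest point, and two decompositions
`a - b = a' - b'` satisfy `‖a - a'‖² = ⟪a - a', b - b'⟫ = -⟪a, b'⟫ - ⟪a', b⟫ ≤ 0`.
-/

open RealInnerProductSpace

section

variable {H : Type*} [NormedAddCommGroup H] [InnerProductSpace ℝ H]

lemma isClosed_setOf_forall_inner_nonneg (P : Set H) :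
    IsClosed {ψ : H | ∀ φ ∈ P, 0 ≤ ⟪ψ, φ⟫} := by
  simp only [Set.ofPred_forall]
  exact isClosed_biInter fun φ _ =>
    isClosed_le continuous_const (continuous_id.inner continuous_const)

lemma inner_sub_eq_zero_of_forall_inner_sub_nonpos {K : Set H}
    (hcone : ∀ c : ℝ, 0 < c → ∀ x ∈ K, c • x ∈ K) {u v : H} (hv : v ∈ K)
    (h : ∀ w ∈ K, ⟪u - v, w - v⟫ ≤ 0) : ⟪u - v, v⟫ = 0 := by
  have hdouble := h ((2 : ℝ) • v) (hcone 2 two_pos v hv)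
  have hhalf := h ((1 / 2 : ℝ) • v) (hcone (1 / 2) one_half_pos v hv)
  have hsmul (c : ℝ) : c • v - v = (c - 1) • v := by rw [sub_smul, one_smul]
  rw [hsmul, real_inner_smul_right] at hdouble hhalf
  norm_num at hdouble hhalf
  linarith

lemma exists_mem_forall_inner_nonneg_and_inner_eq_zero [CompleteSpace H] {K : Set H}
    (hne : K.Nonempty) (hclosed : IsClosed K) (hconv : Convex ℝ K)
    (hcone : ∀ c : ℝ, 0 < c → ∀ x ∈ K, c • x ∈ K) (u : H) :
    ∃ v ∈ K, (∀ w ∈ K, 0 ≤ ⟪w, v - u⟫) ∧ ⟪v, v - u⟫ = 0 := by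
  obtain ⟨v, hv, hmin⟩ := exists_norm_eq_iInf_of_complete_convex hne hclosed.isComplete hconv u
  have hvar := (norm_eq_iInf_iff_real_inner_le_zero hconv hv).mp hmin
  have horth := inner_sub_eq_zero_of_forall_inner_sub_nonpos hcone hv hvar
  refine ⟨v, hv, fun w hw => ?_, ?_⟩
  · have hflip : ⟪w, v - u⟫ = -⟪u - v, w⟫ := by rw [← neg_sub, inner_neg_right, real_inner_comm]
    have := hvar w hw
    rw [inner_sub_right, horth] at this
    linarith
  · rw [← neg_sub, inner_neg_right, real_inner_comm, horth, neg_zero]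

lemma norm_sub_le_norm_sub_of_inner_eq_zero {u a b ψ : H} (hu : u = a - b)
    (hab : ⟪a, b⟫ = 0) (hψ : 0 ≤ ⟪ψ, b⟫) : ‖u - a‖ ≤ ‖u - ψ‖ := by
  have hexpand : ‖u - ψ‖ ^ 2 = ‖a - ψ‖ ^ 2 + 2 * ⟪ψ, b⟫ + ‖u - a‖ ^ 2 := by
    have hdecomp : u - ψ = (a - ψ) + -b := by rw [hu]; abel
    rw [hdecomp, norm_add_sq_real, inner_neg_right, inner_sub_left, hab, hu, sub_sub_cancel_left,
      norm_neg]
    ring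
  rw [← sq_le_sq₀ (norm_nonneg _) (norm_nonneg _), hexpand]
  nlinarith [sq_nonneg ‖a - ψ‖]

lemma eq_of_sub_eq_sub_of_inner_eq_zero {a b a' b' : H} (h : a - b = a' - b')
    (hab : ⟪a, b⟫ = 0) (ha'b' : ⟪a', b'⟫ = 0) (hab' : 0 ≤ ⟪a, b'⟫) (ha'b : 0 ≤ ⟪a', b⟫) :
    a = a' := by
  have hdiff : a - a' = b - b' := sub_eq_sub_iff_sub_eq_sub.mp h
  have hsq : ‖a - a'‖ ^ 2 ≤ 0 := by
    rw [← real_inner_self_eq_norm_sq]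
    nth_rewrite 2 [hdiff]
    rw [inner_sub_left, inner_sub_right, inner_sub_right, hab, ha'b']
    linarith
  rwa [sq_nonpos_iff, norm_eq_zero, sub_eq_zero] at hsq

end

/-- Moreau decomposition with respect to a non-empty self-dual cone `P` in a real Hilbert
space: every `φ` admits a unique decomposition `φ = φ₊ − φ₋` with `φ₊, φ₋ ∈ P` and
`⟨φ₊, φ₋⟩ = 0`; moreover `φ₊` is the metric projection of `φ` onto `P` and `φ₋` is the
metric projection of `−φ` onto `P`. -/
theorem stmt_0 {H : Type*} [NormedAddCommGroup H] [InnerProductSpace ℝ H] [CompleteSpace H]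
    (P : Set H) (hne : P.Nonempty) (hconv : Convex ℝ P)
    (hcone : ∀ (c : ℝ), 0 < c → ∀ x ∈ P, c • x ∈ P)
    (hsd : P = {ψ : H | ∀ φ ∈ P, 0 ≤ (inner ℝ ψ φ : ℝ)}) (φ : H) :
    (∃! p : H × H, p.1 ∈ P ∧ p.2 ∈ P ∧ φ = p.1 - p.2 ∧ (inner ℝ p.1 p.2 : ℝ) = 0) ∧
    (∀ φp φm : H, φp ∈ P → φm ∈ P → φ = φp - φm → (inner ℝ φp φm : ℝ) = 0 →
      (∀ ψ ∈ P, ‖φ - φp‖ ≤ ‖φ - ψ‖) ∧ (∀ ψ ∈ P, ‖(-φ) - φm‖ ≤ ‖(-φ) - ψ‖)) := by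
  have hpos : ∀ ψ ∈ P, ∀ χ ∈ P, 0 ≤ ⟪ψ, χ⟫ := fun ψ hψ => by rw [hsd] at hψ; exact hψ
  have hclosed : IsClosed P := hsd ▸ isClosed_setOf_forall_inner_nonneg P
  obtain ⟨v, hv, hdual, horth⟩ :=
    exists_mem_forall_inner_nonneg_and_inner_eq_zero hne hclosed hconv hcone φ
  have hb : v - φ ∈ P := by
    rw [hsd]
    exact fun χ hχ => real_inner_comm χ (v - φ) ▸ hdual χ hχ
  refine ⟨⟨(v, v - φ), ⟨hv, hb, (sub_sub_cancel v φ).symm, horth⟩, ?_⟩, ?_⟩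
  · rintro ⟨a, b⟩ ⟨ha, hb', hφ, hab⟩
    have hav : a = v := eq_of_sub_eq_sub_of_inner_eq_zero (hφ.symm.trans (sub_sub_cancel v φ).symm)
      hab horth (hpos a ha _ hb) (hpos v hv b hb')
    subst hav
    simp [hφ]
  · intro φp φm hp hm hφ hpm
    refine ⟨fun ψ hψ => norm_sub_le_norm_sub_of_inner_eq_zero hφ hpm (hpos ψ hψ φm hm),
      fun ψ hψ => norm_sub_le_norm_sub_of_inner_eq_zero ?_ ?_ (hpos ψ hψ φp hp)⟩
    · rw [hφ, neg_sub]
    · rwa [real_inner_comm]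
end

section
/- Let σ be a positive definite n×n density matrix and let X be Hermitian. With respect to the decomposition of X into positive and negative parts determined by the self-dual cone of positive semidefinite matrices in the KMS inner product ⟨A,B⟩ = Tr(A σ^{1/2} B σ^{1/2}), the positive part of X equals σ^{-1/4} (σ^{1/4} X σ^{1/4})₍₊₎ σ^{-1/4}, where Y₍₊₎ denotes the spectral positive part of a Hermitian matrix Y. Equivalently, A = σ^{-1/4}(σ^{1/4}Xσ^{1/4})₍₊₎σ^{-1/4} minimizes ‖X − A‖ over all positive semidefinite A, in the KMS norm. -/
open Matrix
open scoped ComplexOrder MatrixOrder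

/-!
Conjugation by `Q = σ^{1/4}` maps the PSD cone onto itself and turns the KMS pairing
`Tr(A σ^{1/2} B σ^{1/2})` into the Hilbert–Schmidt pairing `Tr((QAQ)(QBQ))`, so everything reduces
to `Y = QXQ` with the trace inner product. There, if `Y = P - N` with `P, N ⪰ 0` and `Tr(PN) = 0`,
then `PN = 0`, so `P = Y₍₊₎` by uniqueness of the orthogonal decomposition in a C⋆-algebra; and
for `C ⪰ 0`, `‖Y - C‖² = ‖Y₍₊₎ - C‖² + 2 Re Tr(C Y₍₋₎) + ‖Y₍₋₎‖² ≥ ‖Y₍₋₎‖² = ‖Y - Y₍₊₎‖²`.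
-/

lemma mul_mul_mul_eq_of_mul_eq_one {M : Type*} [Monoid M] {a b : M} (hab : a * b = 1)
    (hba : b * a = 1) (x : M) : a * (b * x * b) * a = x := by
  rw [← mul_assoc, ← mul_assoc, hab, one_mul, mul_assoc, hba, mul_one]

namespace Matrix

theorem trace_conjTranspose_mul_self_mul_conjTranspose_mul_self {R n : Type*} [CommSemiring R]
    [StarRing R] [Fintype n] (E D : Matrix n n R) :
    (Eᴴ * E * (Dᴴ * D)).trace = ((E * Dᴴ)ᴴ * (E * Dᴴ)).trace :=
  calc (Eᴴ * E * (Dᴴ * D)).trace = (Eᴴ * E * Dᴴ * D).trace := by simp only [mul_assoc]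
    _ = (D * (Eᴴ * E * Dᴴ)).trace := trace_mul_comm _ _
    _ = ((E * Dᴴ)ᴴ * (E * Dᴴ)).trace := by
      simp only [conjTranspose_mul, conjTranspose_conjTranspose, mul_assoc]

theorem trace_conj_mul_conj {R n : Type*} [CommSemiring R] [Fintype n] (Q A B : Matrix n n R) :
    (Q * A * Q * (Q * B * Q)).trace = (A * (Q * Q) * B * (Q * Q)).trace := by
  rw [show Q * A * Q * (Q * B * Q) = Q * (A * (Q * Q) * B * Q) by simp only [mul_assoc],
    trace_mul_comm]
  simp only [mul_assoc]

variable {𝕜 n : Type*} [RCLike 𝕜] [Fintype n]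

theorem IsHermitian.re_trace_mul_self_nonneg {H : Matrix n n 𝕜} (hH : H.IsHermitian) :
    0 ≤ RCLike.re (H * H).trace := by
  nth_rewrite 1 [← hH.eq]
  exact (RCLike.nonneg_iff.mp (posSemidef_conjTranspose_mul_self H).trace_nonneg).1

variable [DecidableEq n]

namespace PosSemidef

variable {A B : Matrix n n 𝕜}

theorem re_trace_mul_nonneg (hA : A.PosSemidef) (hB : B.PosSemidef) :
    0 ≤ RCLike.re (A * B).trace := by
  obtain ⟨E, rfl⟩ := CStarAlgebra.nonneg_iff_eq_star_mul_self.mp hA.nonneg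
  obtain ⟨D, rfl⟩ := CStarAlgebra.nonneg_iff_eq_star_mul_self.mp hB.nonneg
  rw [star_eq_conjTranspose, star_eq_conjTranspose,
    trace_conjTranspose_mul_self_mul_conjTranspose_mul_self]
  exact (RCLike.nonneg_iff.mp (posSemidef_conjTranspose_mul_self _).trace_nonneg).1

theorem mul_eq_zero_of_trace_mul_eq_zero (hA : A.PosSemidef) (hB : B.PosSemidef)
    (h : (A * B).trace = 0) : A * B = 0 := by
  obtain ⟨E, rfl⟩ := CStarAlgebra.nonneg_iff_eq_star_mul_self.mp hA.nonneg
  obtain ⟨D, rfl⟩ := CStarAlgebra.nonneg_iff_eq_star_mul_self.mp hB.nonneg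
  rw [star_eq_conjTranspose, star_eq_conjTranspose,
    trace_conjTranspose_mul_self_mul_conjTranspose_mul_self,
    trace_conjTranspose_mul_self_eq_zero_iff] at h
  rw [star_eq_conjTranspose, star_eq_conjTranspose, mul_assoc, ← mul_assoc E, h]
  simp

end PosSemidef

theorem posPart_eq_of_eq_sub_of_trace_mul_eq_zero {Y P N : Matrix n n 𝕜}
    (hP : P.PosSemidef) (hN : N.PosSemidef) (hY : Y = P - N) (h : (P * N).trace = 0) :
    Y⁺ = P :=
  (CFC.posPart_negPart_unique hY (hP.mul_eq_zero_of_trace_mul_eq_zero hN h)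
    hP.nonneg hN.nonneg).1

theorem IsHermitian.re_trace_sub_posPart_mul_self_le {Y C : Matrix n n 𝕜}
    (hY : Y.IsHermitian) (hC : C.PosSemidef) :
    RCLike.re ((Y - Y⁺) * (Y - Y⁺)).trace ≤ RCLike.re ((Y - C) * (Y - C)).trace := by
  have hPN := CFC.posPart_mul_negPart Y
  have hNP := CFC.negPart_mul_posPart Y
  have hYPN : Y = Y⁺ - Y⁻ := (CFC.posPart_sub_negPart Y hY).symm
  have hP : Y⁺.PosSemidef := (CFC.posPart_nonneg Y).posSemidef
  have hN : Y⁻.PosSemidef := (CFC.negPart_nonneg Y).posSemidef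
  set P := Y⁺
  set N := Y⁻
  clear_value P N
  subst hYPN
  have hexp : (P - N - C) * (P - N - C) = (P - C) * (P - C) + (C * N + N * C) + N * N :=
    calc (P - N - C) * (P - N - C)
        = (P - C) * (P - C) + (C * N + N * C) + N * N - (P * N + N * P) := by noncomm_ring
      _ = _ := by rw [hPN, hNP, add_zero, sub_zero]
  rw [hexp, show P - N - P = -N by abel, neg_mul_neg]
  simp only [trace_add, map_add]
  have hPC := (hP.1.sub hC.1).re_trace_mul_self_nonneg
  have hCN := hC.re_trace_mul_nonneg hN
  have hNC := hN.re_trace_mul_nonneg hC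
  linarith

end Matrix

theorem stmt_2_general (n : ℕ) (σ X : Matrix (Fin n) (Fin n) ℂ)
    (hσ : σ.PosDef) (hX : X.IsHermitian) :
    ∀ Q Qi S A₀ : Matrix (Fin n) (Fin n) ℂ,
      Q = cfc (fun x : ℝ => x ^ ((4:ℝ)⁻¹)) σ →
      Qi = cfc (fun x : ℝ => x ^ (-(4:ℝ)⁻¹)) σ →
      S = cfc (fun x : ℝ => x ^ ((2:ℝ)⁻¹)) σ →
      A₀ = Qi * cfc (fun x : ℝ => max x 0) (Q * X * Q) * Qi →
      -- `A₀` is the positive part of `X` in the cone decomposition w.r.t. the KMS inner product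
      (∀ Xp Xm : Matrix (Fin n) (Fin n) ℂ, Xp.PosSemidef → Xm.PosSemidef →
          X = Xp - Xm → (Xp * S * Xm * S).trace = 0 → Xp = A₀) ∧
      A₀.PosSemidef ∧
      -- `A₀` minimizes the KMS norm distance to `X` over the PSD cone
      (∀ B : Matrix (Fin n) (Fin n) ℂ, B.PosSemidef →
          ((X - A₀) * S * (X - A₀) * S).trace.re ≤ ((X - B) * S * (X - B) * S).trace.re) := by
  intro Q Qi S A₀ hQ hQi hS hA₀
  have hσ' : IsStrictlyPositive σ := hσ.isStrictlyPositive
  rw [← CFC.rpow_eq_cfc_real hσ'.nonneg] at hQ hQi hS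
  have hQQi : Q * Qi = 1 := hQ ▸ hQi ▸ CFC.rpow_mul_rpow_neg _ hσ'
  have hQiQ : Qi * Q = 1 := hQ ▸ hQi ▸ CFC.rpow_neg_mul_rpow _ hσ'
  have hQQ : Q * Q = S := by rw [hQ, hS, ← CFC.rpow_add hσ'.isUnit]; norm_num
  have hQh : Qᴴ = Q := (hQ ▸ CFC.rpow_nonneg : 0 ≤ Q).posSemidef.1
  have hQih : Qiᴴ = Qi := (hQi ▸ CFC.rpow_nonneg : 0 ≤ Qi).posSemidef.1
  have hconj {B : Matrix (Fin n) (Fin n) ℂ} (hB : B.PosSemidef) : (Q * B * Q).PosSemidef := by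
    simpa only [hQh] using hB.conjTranspose_mul_mul_same Q
  have hA₀Y : A₀ = Qi * (Q * X * Q)⁺ * Qi := by rw [hA₀, CFC.posPart_def, cfcₙ_eq_cfc]; rfl
  refine ⟨fun Xp Xm hXp hXm hXpm htr => ?_, ?_, fun B hB => ?_⟩
  · have hYp : (Q * X * Q)⁺ = Q * Xp * Q :=
      posPart_eq_of_eq_sub_of_trace_mul_eq_zero (hconj hXp) (hconj hXm)
        (by rw [hXpm, mul_sub, sub_mul]) (by rw [trace_conj_mul_conj, hQQ, htr])
    rw [hA₀Y, hYp, mul_mul_mul_eq_of_mul_eq_one hQiQ hQQi]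
  · rw [hA₀Y]
    simpa only [hQih] using
      (CFC.posPart_nonneg (Q * X * Q)).posSemidef.conjTranspose_mul_mul_same Qi
  · have hXA₀ : Q * (X - A₀) * Q = Q * X * Q - (Q * X * Q)⁺ := by
      rw [mul_sub, sub_mul, hA₀Y, mul_mul_mul_eq_of_mul_eq_one hQQi hQiQ]
    have hXB : Q * (X - B) * Q = Q * X * Q - Q * B * Q := by rw [mul_sub, sub_mul]
    have hY : (Q * X * Q).IsHermitian := by
      simpa only [hQh] using isHermitian_conjTranspose_mul_mul Q hX
    rw [← hQQ, ← trace_conj_mul_conj, ← trace_conj_mul_conj, hXA₀, hXB]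
    exact hY.re_trace_sub_posPart_mul_self_le (hconj hB)

/-- Moreau decomposition for the KMS inner product `⟨A,B⟩ = Tr(A σ^{1/2} B σ^{1/2})`:
for a positive definite density matrix `σ` and Hermitian `X`, the positive part of `X` with
respect to the cone of PSD matrices is `σ^{-1/4} (σ^{1/4} X σ^{1/4})₍₊₎ σ^{-1/4}`, where
`Y₍₊₎ = max(·,0)(Y)` is the spectral positive part.  Equivalently, this matrix minimizes the
KMS distance `‖X − A‖` over all PSD matrices `A`. -/
theorem stmt_2 (n : ℕ) (σ X : Matrix (Fin n) (Fin n) ℂ)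
    (hσ : σ.PosDef) (htr : σ.trace = 1) (hX : X.IsHermitian) :
    ∀ Q Qi S A₀ : Matrix (Fin n) (Fin n) ℂ,
      Q = cfc (fun x : ℝ => x ^ ((4:ℝ)⁻¹)) σ →
      Qi = cfc (fun x : ℝ => x ^ (-(4:ℝ)⁻¹)) σ →
      S = cfc (fun x : ℝ => x ^ ((2:ℝ)⁻¹)) σ →
      A₀ = Qi * cfc (fun x : ℝ => max x 0) (Q * X * Q) * Qi →
      -- `A₀` is the positive part of `X` in the cone decomposition w.r.t. the KMS inner product
      (∀ Xp Xm : Matrix (Fin n) (Fin n) ℂ, Xp.PosSemidef → Xm.PosSemidef →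
          X = Xp - Xm → (Xp * S * Xm * S).trace = 0 → Xp = A₀) ∧
      A₀.PosSemidef ∧
      -- `A₀` minimizes the KMS norm distance to `X` over the PSD cone
      (∀ B : Matrix (Fin n) (Fin n) ℂ, B.PosSemidef →
          ((X - A₀) * S * (X - A₀) * S).trace.re ≤ ((X - B) * S * (X - B) * S).trace.re) :=
  stmt_2_general n σ X hσ hX
end

section
/- Let σ be an invertible n×n density matrix that is not a scalar multiple of the identity, and let s ∈ [0,1]. The cone of positive semidefinite Hermitian matrices is self-dual with respect to the inner product ⟨A,B⟩_s = Tr(A* σ^s B σ^{1-s}) if and only if s = 1/2. -/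
/-!
Write `P t = cfc (· ^ t) σ`. By cyclicity,
`Tr (X * P s * A * P (1 - s)) = Tr ((P (1 - s) * X * P s) * A)`,
and a complex matrix pairs nonnegatively with every positive semidefinite `A` exactly when it is
itself positive semidefinite. So the dual cone of the PSD cone for `⟨·,·⟩_s` is
`{X | P (1 - s) * X * P s ≥ 0}`.

For `s = 1/2` this is a congruence by the invertible Hermitian matrix `σ ^ (1/2)`, which preserves
the PSD cone. For `s ≠ 1/2`, the all-ones matrix in the eigenbasis of `σ` is PSD, and Hermiticity
of its image forces `λ i ^ (1 - s) * λ j ^ s = λ j ^ (1 - s) * λ i ^ s`, i.e.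
`(λ i / λ j) ^ (1 - 2 s) = 1`; hence all eigenvalues agree and `σ` is scalar.
-/

open Matrix
open scoped ComplexOrder

theorem Real.eq_of_rpow_one_sub_mul_rpow_eq {p q s : ℝ} (hp : 0 < p) (hq : 0 < q) (hs : s ≠ 1 / 2)
    (h : p ^ (1 - s) * q ^ s = q ^ (1 - s) * p ^ s) : p = q := by
  have split (x : ℝ) (hx : 0 < x) : x ^ (1 - s) = x ^ (1 - 2 * s) * x ^ s := by
    rw [← Real.rpow_add hx]; ring_nf
  have hpq : 0 < p ^ s * q ^ s := by positivity
  have : p ^ (1 - 2 * s) = q ^ (1 - 2 * s) := by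
    rw [split p hp, split q hq] at h
    exact mul_right_cancel₀ hpq.ne' (by linear_combination h)
  exact (Real.rpow_left_inj hp.le hq.le (by contrapose! hs; linarith)).mp this

namespace Matrix

variable {n : Type*} [Fintype n]

theorem trace_mul_vecMulVec_star {R : Type*} [CommSemiring R] [StarRing R]
    (M : Matrix n n R) (x : n → R) :
    (M * vecMulVec x (star x)).trace = star x ⬝ᵥ (M *ᵥ x) := by
  rw [mul_vecMulVec, trace_vecMulVec, dotProduct_comm]

variable [DecidableEq n]

theorem posSemidef_iff_forall_star_dotProduct_mulVec_nonneg {M : Matrix n n ℂ} :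
    M.PosSemidef ↔ ∀ x, 0 ≤ star x ⬝ᵥ (M *ᵥ x) := by
  have inner_eq (x : EuclideanSpace ℂ n) :
      inner ℂ (M.toEuclideanLin x) x = star (star x.ofLp ⬝ᵥ (M *ᵥ x.ofLp)) := by
    rw [EuclideanSpace.inner_eq_star_dotProduct, star_dotProduct, star_star, toLpLin_apply,
      dotProduct_comm]
  have nonneg_iff (z : ℂ) : ((z.re : ℂ) = z ∧ 0 ≤ z.re) ↔ 0 ≤ z := by
    rw [Complex.nonneg_iff, Complex.ext_iff]
    simp [eq_comm, and_comm]
  rw [← isPositive_toEuclideanLin_iff, LinearMap.isPositive_iff_complex]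
  simp only [inner_eq, RCLike.re_to_complex, nonneg_iff, star_nonneg_iff]
  exact (WithLp.equiv 2 (n → ℂ)).forall_congr_left

theorem forall_posSemidef_trace_mul_nonneg_iff {M : Matrix n n ℂ} :
    (∀ A : Matrix n n ℂ, A.PosSemidef → 0 ≤ (M * A).trace) ↔ M.PosSemidef := by
  refine ⟨fun h => posSemidef_iff_forall_star_dotProduct_mulVec_nonneg.mpr fun x => ?_,
    fun hM A hA => ?_⟩
  · simpa [trace_mul_vecMulVec_star] using h _ (posSemidef_vecMulVec_self_star x)
  · obtain ⟨m, v, rfl⟩ := posSemidef_iff_eq_sum_vecMulVec.mp hA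
    rw [Matrix.mul_sum, trace_sum]
    exact Finset.sum_nonneg fun i _ => by
      simpa [trace_mul_vecMulVec_star] using hM.dotProduct_mulVec_nonneg (v i)

variable {𝕜 : Type*} [RCLike 𝕜]

theorem IsHermitian.cfc_mul_conj_mul_cfc {A : Matrix n n 𝕜} (hA : A.IsHermitian)
    (f g : ℝ → ℝ) (Y : Matrix n n 𝕜) :
    cfc f A * Unitary.conjStarAlgAut 𝕜 _ hA.eigenvectorUnitary Y * cfc g A =
      Unitary.conjStarAlgAut 𝕜 _ hA.eigenvectorUnitary
        (diagonal (RCLike.ofReal ∘ f ∘ hA.eigenvalues) * Y *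
          diagonal (RCLike.ofReal ∘ g ∘ hA.eigenvalues)) := by
  simp only [hA.cfc_eq, IsHermitian.cfc, map_mul]

theorem IsHermitian.exists_eq_smul_one_of_eigenvalues_eq {A : Matrix n n 𝕜} (hA : A.IsHermitian)
    (h : ∀ i j, hA.eigenvalues i = hA.eigenvalues j) : ∃ c : 𝕜, A = c • 1 := by
  rcases isEmpty_or_nonempty n with _ | ⟨⟨i⟩⟩
  · exact ⟨0, Subsingleton.elim _ _⟩
  refine ⟨hA.eigenvalues i, ?_⟩
  have hspec : spectrum ℝ A ⊆ {hA.eigenvalues i} := by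
    rw [hA.spectrum_real_eq_range_eigenvalues]
    rintro _ ⟨j, rfl⟩
    exact h j i
  rw [← RCLike.real_smul_eq_coe_smul, ← Algebra.algebraMap_eq_smul_one]
  exact CFC.eq_algebraMap_of_spectrum_subset_singleton A _ hspec

theorem posSemidef_cfc_mul_mul_cfc_iff {A X : Matrix n n 𝕜} (hA : A.IsHermitian) {f : ℝ → ℝ}
    (hf : ∀ x ∈ spectrum ℝ A, f x ≠ 0) :
    (cfc f A * X * cfc f A).PosSemidef ↔ X.PosSemidef := by
  have hunit : IsUnit (cfc f A) :=
    (isUnit_cfc_iff f A (A.finite_real_spectrum.continuousOn f) hA.isSelfAdjoint).mpr hf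
  have hstar : star (cfc f A) = cfc f A := (cfc_predicate f A : IsSelfAdjoint _).star_eq
  simpa only [hstar] using hunit.posSemidef_star_right_conjugate_iff (x := X)

theorem PosDef.eigenvalues_eq_of_forall_posSemidef_cfc_mul_mul_cfc {σ : Matrix n n ℂ}
    (hσ : σ.PosDef) {s : ℝ} (hs : s ≠ 1 / 2)
    (h : ∀ X : Matrix n n ℂ, X.PosSemidef →
      (cfc (fun x : ℝ => x ^ (1 - s)) σ * X * cfc (fun x : ℝ => x ^ s) σ).PosSemidef)
    (i j : n) : hσ.1.eigenvalues i = hσ.1.eigenvalues j := by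
  have hJ :
      (Unitary.conjStarAlgAut ℂ _ hσ.1.eigenvectorUnitary (vecMulVec 1 (star 1))).PosSemidef := by
    rw [Unitary.conjStarAlgAut_apply, Unitary.isUnit_coe.posSemidef_star_right_conjugate_iff]
    exact posSemidef_vecMulVec_self_star 1
  have hM := h _ hJ
  rw [IsHermitian.cfc_mul_conj_mul_cfc, Unitary.conjStarAlgAut_apply,
    Unitary.isUnit_coe.posSemidef_star_right_conjugate_iff] at hM
  have hij : ((hσ.1.eigenvalues j ^ (1 - s) * hσ.1.eigenvalues i ^ s : ℝ) : ℂ) =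
      ((hσ.1.eigenvalues i ^ (1 - s) * hσ.1.eigenvalues j ^ s : ℝ) : ℂ) := by
    simpa [diagonal_mul, mul_diagonal] using hM.1.apply i j
  exact (Real.eq_of_rpow_one_sub_mul_rpow_eq (hσ.eigenvalues_pos j) (hσ.eigenvalues_pos i) hs
    (by exact_mod_cast hij)).symm

end Matrix

theorem stmt_3_general (n : ℕ) (σ : Matrix (Fin n) (Fin n) ℂ)
    (hσ : σ.PosDef) (hns : ∀ c : ℂ, σ ≠ c • (1 : Matrix (Fin n) (Fin n) ℂ))
    (s : ℝ) :
    (∀ X : Matrix (Fin n) (Fin n) ℂ, X.IsHermitian →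
        ((∀ A : Matrix (Fin n) (Fin n) ℂ, A.PosSemidef →
            0 ≤ (Xᴴ * cfc (fun x : ℝ => x ^ s) σ * A * cfc (fun x : ℝ => x ^ (1 - s)) σ).trace)
          ↔ X.PosSemidef))
      ↔ s = 1 / 2 := by
  have dual (X : Matrix (Fin n) (Fin n) ℂ) :
      (∀ A : Matrix (Fin n) (Fin n) ℂ, A.PosSemidef →
          0 ≤ (Xᴴ * cfc (fun x : ℝ => x ^ s) σ * A * cfc (fun x : ℝ => x ^ (1 - s)) σ).trace) ↔
        (cfc (fun x : ℝ => x ^ (1 - s)) σ * Xᴴ * cfc (fun x : ℝ => x ^ s) σ).PosSemidef := by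
    rw [← forall_posSemidef_trace_mul_nonneg_iff]
    refine forall₂_congr fun A _ => ?_
    rw [trace_mul_comm]
    simp only [mul_assoc]
  simp only [dual]
  constructor
  · intro h
    by_contra hs
    obtain ⟨c, hc⟩ := hσ.1.exists_eq_smul_one_of_eigenvalues_eq
      (hσ.eigenvalues_eq_of_forall_posSemidef_cfc_mul_mul_cfc hs fun X hX =>
        hX.1.eq ▸ (h X hX.1).mpr hX)
    exact hns c hc
  · rintro rfl X hX
    rw [hX.eq, show (1 : ℝ) - 1 / 2 = 1 / 2 by norm_num]
    refine posSemidef_cfc_mul_mul_cfc_iff hσ.1 fun x hx => ?_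
    obtain ⟨i, rfl⟩ := hσ.1.spectrum_real_eq_range_eigenvalues ▸ hx
    exact (Real.rpow_pos_of_pos (hσ.eigenvalues_pos i) _).ne'

/-- Let `σ` be an invertible density matrix that is not a multiple of the identity, and
`s ∈ [0,1]`.  The cone of PSD Hermitian matrices is self-dual with respect to the inner
product `⟨A,B⟩_s = Tr(A* σ^s B σ^{1-s})` if and only if `s = 1/2`. -/
theorem stmt_3 (n : ℕ) (σ : Matrix (Fin n) (Fin n) ℂ)
    (hσ : σ.PosDef) (htr : σ.trace = 1) (hns : ∀ c : ℂ, σ ≠ c • (1 : Matrix (Fin n) (Fin n) ℂ))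
    (s : ℝ) (hs : s ∈ Set.Icc (0:ℝ) 1) :
    (∀ X : Matrix (Fin n) (Fin n) ℂ, X.IsHermitian →
        ((∀ A : Matrix (Fin n) (Fin n) ℂ, A.PosSemidef →
            0 ≤ (Xᴴ * cfc (fun x : ℝ => x ^ s) σ * A * cfc (fun x : ℝ => x ^ (1 - s)) σ).trace)
          ↔ X.PosSemidef))
      ↔ s = 1 / 2 :=
  stmt_3_general n σ hσ hns s
end

section
/- (Chain rule for the logarithm.) Let ρ, σ be positive definite density matrices in M_n(ℂ), let V ∈ M_n(ℂ) satisfy σ V σ^{-1} = e^{-ω}V for some ω ∈ ℝ, and set ∂A = [V,A] = VA − AV. Define ρ̂ = Σ_{ℓ,m} Λ(e^{ω/2}λ_ℓ, e^{-ω/2}λ_m) E_ℓ ⊗ E_m, where ρ = Σ_ℓ λ_ℓ E_ℓ is the spectral decomposition of ρ and Λ(x,y) = (x−y)/(log x − log y) is the logarithmic mean (Λ(x,x)=x). Then e^{-ω/2} V ρ − e^{ω/2} ρ V = ρ̂ # ∂(log ρ − log σ), where (A⊗B)#C := A C B extended linearly. -/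
open Matrix
open scoped ComplexOrder

lemma logcomm (n : ℕ) (σ V : Matrix (Fin n) (Fin n) ℂ) (hσ : σ.PosDef) (ω : ℝ)
    (h : σ * V = (Real.exp (-ω) : ℂ) • (V * σ)) :
    cfc Real.log σ * V - V * cfc Real.log σ = ((-ω : ℝ) : ℂ) • V := by
  have hH : σ.IsHermitian := hσ.1
  set U : Matrix (Fin n) (Fin n) ℂ := (hH.eigenvectorUnitary : Matrix (Fin n) (Fin n) ℂ) with hUdef
  have hU1 : star U * U = 1 := Unitary.star_mul_self_of_mem (SetLike.coe_mem _)
  have hU2 : U * star U = 1 := Unitary.mul_star_self_of_mem (SetLike.coe_mem _)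
  have cancel1 : ∀ X : Matrix (Fin n) (Fin n) ℂ, U * (star U * X) = X := fun X => by
    rw [← mul_assoc, hU2, one_mul]
  have cancel2 : ∀ X : Matrix (Fin n) (Fin n) ℂ, star U * (U * X) = X := fun X => by
    rw [← mul_assoc, hU1, one_mul]
  set e : Fin n → ℝ := hH.eigenvalues with hedef
  set W : Matrix (Fin n) (Fin n) ℂ := star U * V * U with hWdef
  have hspec : σ = U * diagonal (RCLike.ofReal ∘ e) * star U := hH.spectral_theorem
  have hV : V = U * W * star U := by
    rw [hWdef]; simp only [mul_assoc, cancel1]; rw [← mul_assoc, mul_assoc, hU2, mul_one]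
  have hrel : diagonal ((RCLike.ofReal : ℝ → ℂ) ∘ e) * W
      = (Real.exp (-ω) : ℂ) • (W * diagonal (RCLike.ofReal ∘ e)) := by
    have h1 : diagonal ((RCLike.ofReal : ℝ → ℂ) ∘ e) = star U * σ * U := by
      rw [hspec]; simp only [mul_assoc, cancel2]; rw [← mul_assoc, mul_assoc, hU1, mul_one]
    rw [h1, hWdef]
    calc star U * σ * U * (star U * V * U)
        = star U * (σ * V) * U := by simp only [mul_assoc, cancel1, cancel2]
      _ = (Real.exp (-ω) : ℂ) • (star U * (V * σ) * U) := by
          rw [h, Matrix.mul_smul, Matrix.smul_mul]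
      _ = (Real.exp (-ω) : ℂ) • (star U * V * U * (star U * σ * U)) := by
          congr 1; simp only [mul_assoc, cancel1, cancel2]
  have hW : ∀ i j, (e i : ℂ) * W i j = (Real.exp (-ω) : ℂ) * (W i j * (e j : ℂ)) := by
    intro i j
    have := congrFun (congrFun hrel i) j
    simpa [Matrix.diagonal_mul, Matrix.mul_diagonal, mul_comm] using this
  have key : diagonal ((RCLike.ofReal : ℝ → ℂ) ∘ Real.log ∘ e) * W
      - W * diagonal (RCLike.ofReal ∘ Real.log ∘ e) = ((-ω : ℝ) : ℂ) • W := by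
    ext i j
    simp only [Matrix.sub_apply, Matrix.diagonal_mul, Matrix.mul_diagonal, Matrix.smul_apply,
      Function.comp_apply, smul_eq_mul]
    by_cases h0 : W i j = 0
    · simp [h0]
    · have hei : 0 < e i := hσ.eigenvalues_pos i
      have hej : 0 < e j := hσ.eigenvalues_pos j
      have hc : (e i : ℂ) = (Real.exp (-ω) : ℂ) * (e j : ℂ) := by
        have h2 := hW i j
        have h3 : ((e i : ℂ) - (Real.exp (-ω) : ℂ) * (e j : ℂ)) * W i j = 0 := by
          linear_combination h2
        rcases mul_eq_zero.mp h3 with h4 | h4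
        · exact sub_eq_zero.mp h4
        · exact absurd h4 h0
      have hre : e i = Real.exp (-ω) * e j := by exact_mod_cast hc
      have hlog : Real.log (e i) = -ω + Real.log (e j) := by
        rw [hre, Real.log_mul (Real.exp_ne_zero _) hej.ne', Real.log_exp]
      rw [hlog]
      push_cast
      ring_nf
      rw [mul_comm]
      norm_cast
  have hcfc : cfc Real.log σ
      = U * diagonal ((RCLike.ofReal : ℝ → ℂ) ∘ Real.log ∘ e) * star U := by
    rw [hH.cfc_eq]
    rfl
  rw [hcfc]
  conv_lhs => rw [hV]
  calc U * diagonal ((RCLike.ofReal : ℝ → ℂ) ∘ Real.log ∘ e) * star U * (U * W * star U)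
        - U * W * star U * (U * diagonal ((RCLike.ofReal : ℝ → ℂ) ∘ Real.log ∘ e) * star U)
      = U * ((diagonal ((RCLike.ofReal : ℝ → ℂ) ∘ Real.log ∘ e) * W
          - W * diagonal (RCLike.ofReal ∘ Real.log ∘ e)) * star U) := by
        rw [Matrix.sub_mul, Matrix.mul_sub]
        simp only [mul_assoc, cancel1, cancel2]
      _ = ((-ω : ℝ) : ℂ) • V := by
        rw [key, Matrix.smul_mul, Matrix.mul_smul, hV]
        simp only [mul_assoc]


/-- Chain rule for the logarithm: with `ρ = Σ_ℓ λ_ℓ E_ℓ` a spectral decomposition of a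
positive definite density matrix, `σ` a positive definite density matrix,
`σ V σ⁻¹ = e^{-ω} V`, `∂A = [V,A]`, and `Λ` the logarithmic mean, one has
`e^{-ω/2} V ρ − e^{ω/2} ρ V = ρ̂ # ∂(log ρ − log σ)`, where
`ρ̂ # C = Σ_{ℓ,m} Λ(e^{ω/2}λ_ℓ, e^{-ω/2}λ_m) E_ℓ C E_m`. -/
theorem stmt_7 (n : ℕ) (ι : Type*) [Fintype ι] [DecidableEq ι]
    (σ ρ V : Matrix (Fin n) (Fin n) ℂ) (hσ : σ.PosDef)
    (htrσ : σ.trace = 1) (htrρ : ρ.trace = 1)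
    (ω : ℝ) (heig : σ * V * σ⁻¹ = (Real.exp (-ω) : ℂ) • V)
    (lam : ι → ℝ) (E : ι → Matrix (Fin n) (Fin n) ℂ)
    (hpos : ∀ ℓ, 0 < lam ℓ)
    (hspec : ρ = ∑ ℓ, (lam ℓ : ℂ) • E ℓ)
    (hproj : ∀ ℓ m, E ℓ * E m = if ℓ = m then E ℓ else 0)
    (hsum : ∑ ℓ, E ℓ = 1)
    (Lam : ℝ → ℝ → ℝ)
    (hLam : ∀ x y, Lam x y = if x = y then x else (x - y) / (Real.log x - Real.log y)) :
    (Real.exp (-ω / 2) : ℂ) • (V * ρ) - (Real.exp (ω / 2) : ℂ) • (ρ * V)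
      = ∑ ℓ, ∑ m,
          (Lam (Real.exp (ω / 2) * lam ℓ) (Real.exp (-ω / 2) * lam m) : ℂ) •
            (E ℓ *
              (V * ((∑ k, (Real.log (lam k) : ℂ) • E k) - cfc Real.log σ)
                - ((∑ k, (Real.log (lam k) : ℂ) • E k) - cfc Real.log σ) * V)
              * E m) := by
  have hdet : IsUnit σ.det := (Matrix.isUnit_iff_isUnit_det σ).mp hσ.isUnit
  have hσV : σ * V = (Real.exp (-ω) : ℂ) • (V * σ) := by
    calc σ * V = σ * V * σ⁻¹ * σ := by
          rw [mul_assoc (σ * V), Matrix.nonsing_inv_mul σ hdet, mul_one]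
      _ = ((Real.exp (-ω) : ℂ) • V) * σ := by rw [heig]
      _ = (Real.exp (-ω) : ℂ) • (V * σ) := smul_mul_assoc _ _ _
  have hlog := logcomm n σ V hσ ω hσV
  set S := cfc Real.log σ with hSdef
  set P := ∑ k, (Real.log (lam k) : ℂ) • E k with hPdef
  have hS : V * S - S * V = (ω : ℂ) • V := by
    rw [← neg_sub (S * V) (V * S), hlog, ← neg_smul]
    congr 1
    push_cast
    ring
  have hPE : ∀ m, P * E m = (Real.log (lam m) : ℂ) • E m := by
    intro m
    rw [hPdef, Finset.sum_mul]
    simp only [smul_mul_assoc, hproj, smul_ite, smul_zero]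
    simp
  have hEP : ∀ ℓ, E ℓ * P = (Real.log (lam ℓ) : ℂ) • E ℓ := by
    intro ℓ
    rw [hPdef, Finset.mul_sum]
    simp only [mul_smul_comm, hproj, smul_ite, smul_zero]
    simp
  have key : ∀ ℓ m, E ℓ * (V * (P - S) - (P - S) * V) * E m
      = ((Real.log (lam m) - Real.log (lam ℓ) - ω : ℝ) : ℂ) • (E ℓ * V * E m) := by
    intro ℓ m
    have expand : V * (P - S) - (P - S) * V = (V * P - P * V) - ((ω : ℂ) • V) := by
      rw [← hS]
      noncomm_ring
    have t1 : E ℓ * (V * P) * E m = (Real.log (lam m) : ℂ) • (E ℓ * V * E m) := by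
      simp only [mul_assoc, hPE m, mul_smul_comm]
    have t2 : E ℓ * (P * V) * E m = (Real.log (lam ℓ) : ℂ) • (E ℓ * V * E m) := by
      rw [← mul_assoc (E ℓ) P V, hEP ℓ]
      simp only [smul_mul_assoc, mul_assoc]
    have t3 : E ℓ * ((ω : ℂ) • V) * E m = (ω : ℂ) • (E ℓ * V * E m) := by
      simp only [mul_smul_comm, smul_mul_assoc, mul_assoc]
    rw [expand, Matrix.mul_sub, Matrix.sub_mul, Matrix.mul_sub, Matrix.sub_mul, t1, t2, t3]
    push_cast
    rw [sub_smul, sub_smul]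
  have coeff : ∀ ℓ m, Lam (Real.exp (ω / 2) * lam ℓ) (Real.exp (-ω / 2) * lam m)
      * (Real.log (lam m) - Real.log (lam ℓ) - ω)
      = Real.exp (-ω / 2) * lam m - Real.exp (ω / 2) * lam ℓ := by
    intro ℓ m
    set x := Real.exp (ω / 2) * lam ℓ with hxdef
    set y := Real.exp (-ω / 2) * lam m with hydef
    have hx : 0 < x := mul_pos (Real.exp_pos _) (hpos ℓ)
    have hy : 0 < y := mul_pos (Real.exp_pos _) (hpos m)
    have hlx : Real.log x = ω / 2 + Real.log (lam ℓ) := by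
      rw [hxdef, Real.log_mul (Real.exp_ne_zero _) (hpos ℓ).ne', Real.log_exp]
    have hly : Real.log y = -ω / 2 + Real.log (lam m) := by
      rw [hydef, Real.log_mul (Real.exp_ne_zero _) (hpos m).ne', Real.log_exp]
    have hd : Real.log (lam m) - Real.log (lam ℓ) - ω = Real.log y - Real.log x := by
      rw [hlx, hly]; ring
    rw [hd, hLam]
    by_cases hxy : x = y
    · simp [hxy]
    · rw [if_neg hxy]
      have hlne : Real.log x - Real.log y ≠ 0 := by
        rw [sub_ne_zero]
        exact fun hh => hxy (Real.log_injOn_pos (Set.mem_Ioi.mpr hx) (Set.mem_Ioi.mpr hy) hh)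
      field_simp
      ring
  have step1 : (∑ ℓ, ∑ m,
        (Lam (Real.exp (ω / 2) * lam ℓ) (Real.exp (-ω / 2) * lam m) : ℂ) •
          (E ℓ * (V * (P - S) - (P - S) * V) * E m))
      = ∑ ℓ, ∑ m, ((Real.exp (-ω / 2) * lam m - Real.exp (ω / 2) * lam ℓ : ℝ) : ℂ) •
          (E ℓ * V * E m) := by
    refine Finset.sum_congr rfl fun ℓ _ => Finset.sum_congr rfl fun m _ => ?_
    rw [key ℓ m, smul_smul, ← Complex.ofReal_mul, coeff ℓ m]
  have sum1 : ∑ ℓ, ∑ m, ((lam m : ℂ)) • (E ℓ * V * E m) = V * ρ := by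
    calc ∑ ℓ, ∑ m, ((lam m : ℂ)) • (E ℓ * V * E m)
        = ∑ ℓ, E ℓ * V * (∑ m, (lam m : ℂ) • E m) := by
          refine Finset.sum_congr rfl fun ℓ _ => ?_
          rw [Finset.mul_sum]
          exact Finset.sum_congr rfl fun m _ => (mul_smul_comm _ _ _).symm
      _ = ∑ ℓ, E ℓ * (V * ρ) := by
          rw [← hspec]
          exact Finset.sum_congr rfl fun ℓ _ => mul_assoc _ _ _
      _ = (∑ ℓ, E ℓ) * (V * ρ) := (Finset.sum_mul _ _ _).symm
      _ = V * ρ := by rw [hsum, one_mul]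
  have sum2 : ∑ ℓ, ∑ m, ((lam ℓ : ℂ)) • (E ℓ * V * E m) = ρ * V := by
    calc ∑ ℓ, ∑ m, ((lam ℓ : ℂ)) • (E ℓ * V * E m)
        = ∑ ℓ, (lam ℓ : ℂ) • (E ℓ * V * (∑ m, E m)) := by
          refine Finset.sum_congr rfl fun ℓ _ => ?_
          rw [Finset.mul_sum, Finset.smul_sum]
      _ = ∑ ℓ, (lam ℓ : ℂ) • (E ℓ * V) := by rw [hsum]; simp
      _ = (∑ ℓ, (lam ℓ : ℂ) • E ℓ) * V := by rw [Finset.sum_mul]; simp [smul_mul_assoc]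
      _ = ρ * V := by rw [← hspec]
  have step2 : (∑ ℓ, ∑ m, ((Real.exp (-ω / 2) * lam m - Real.exp (ω / 2) * lam ℓ : ℝ) : ℂ) •
          (E ℓ * V * E m))
      = (Real.exp (-ω / 2) : ℂ) • (V * ρ) - (Real.exp (ω / 2) : ℂ) • (ρ * V) := by
    have expand2 : ∀ ℓ m, ((Real.exp (-ω / 2) * lam m - Real.exp (ω / 2) * lam ℓ : ℝ) : ℂ) •
          (E ℓ * V * E m)
        = (Real.exp (-ω / 2) : ℂ) • ((lam m : ℂ) • (E ℓ * V * E m))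
          - (Real.exp (ω / 2) : ℂ) • ((lam ℓ : ℂ) • (E ℓ * V * E m)) := by
      intro ℓ m
      rw [smul_smul, smul_smul, ← sub_smul]
      congr 1
      push_cast
      ring
    calc (∑ ℓ, ∑ m, ((Real.exp (-ω / 2) * lam m - Real.exp (ω / 2) * lam ℓ : ℝ) : ℂ) •
            (E ℓ * V * E m))
        = ∑ ℓ, ∑ m, ((Real.exp (-ω / 2) : ℂ) • ((lam m : ℂ) • (E ℓ * V * E m))
            - (Real.exp (ω / 2) : ℂ) • ((lam ℓ : ℂ) • (E ℓ * V * E m))) :=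
          Finset.sum_congr rfl fun ℓ _ => Finset.sum_congr rfl fun m _ => expand2 ℓ m
      _ = (Real.exp (-ω / 2) : ℂ) • (∑ ℓ, ∑ m, (lam m : ℂ) • (E ℓ * V * E m))
            - (Real.exp (ω / 2) : ℂ) • (∑ ℓ, ∑ m, (lam ℓ : ℂ) • (E ℓ * V * E m)) := by
          simp only [Finset.sum_sub_distrib, Finset.smul_sum]
      _ = (Real.exp (-ω / 2) : ℂ) • (V * ρ) - (Real.exp (ω / 2) : ℂ) • (ρ * V) := by
          rw [sum1, sum2]
  rw [step1, step2]
end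

section
/- For m ∈ ℝ \ {0,1} and positive reals λ ≠ μ, the power difference mean θ_m(λ,μ) = ((m−1)/m) · (λ^m − μ^m)/(λ^{m−1} − μ^{m−1}) admits the integral representation θ_m(λ,μ) = ∫₀¹ ((1−α) λ^{m−1} + α μ^{m−1})^{1/(m−1)} dα. -/
/-! Substituting `x = (1 - α) a + α b` with `a = λ^(m-1)`, `b = μ^(m-1)` turns the integral
into `(b - a)⁻¹ ∫ₐᵇ x^(1/(m-1)) dx`. Since `1/(m-1) + 1 = m/(m-1)`, the antiderivative
evaluates to `a^(m/(m-1)) = λ^m` and `b^(m/(m-1)) = μ^m`. -/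

open intervalIntegral

theorem integral_comp_lineMap_unitInterval (f : ℝ → ℝ) {a b : ℝ} (hab : a ≠ b) :
    ∫ α in (0:ℝ)..1, f ((1 - α) * a + α * b) = (b - a)⁻¹ * ∫ x in a..b, f x := by
  have hba : b - a ≠ 0 := sub_ne_zero.mpr hab.symm
  have h := integral_comp_mul_add (f := f) (a := 0) (b := 1) hba a
  simp only [mul_zero, zero_add, mul_one, sub_add_cancel, smul_eq_mul] at h
  rw [← h]
  congr 1 with α
  ring_nf

theorem integral_rpow_lineMap_unitInterval {a b p : ℝ} (ha : 0 < a) (hb : 0 < b) (hab : a ≠ b)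
    (hp : p + 1 ≠ 0) :
    ∫ α in (0:ℝ)..1, ((1 - α) * a + α * b) ^ p
      = (b ^ (p + 1) - a ^ (p + 1)) / ((p + 1) * (b - a)) := by
  have hzero : (0:ℝ) ∉ Set.uIcc a b := by simp [Set.mem_uIcc, ha.not_ge, hb.not_ge]
  rw [integral_comp_lineMap_unitInterval (· ^ p) hab,
    integral_rpow (Or.inr ⟨fun h => hp (by linarith), hzero⟩),
    mul_comm (p + 1), ← div_div, inv_mul_eq_div, div_right_comm]

/-- Integral representation of the power difference mean:
for `m ∉ {0,1}` and positive `λ ≠ μ`,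
`θ_m(λ,μ) = ((m−1)/m)·(λ^m − μ^m)/(λ^{m−1} − μ^{m−1})
          = ∫₀¹ ((1−α) λ^{m−1} + α μ^{m−1})^{1/(m−1)} dα`. -/
theorem stmt_9 (m lam mu : ℝ) (hm0 : m ≠ 0) (hm1 : m ≠ 1)
    (hlam : 0 < lam) (hmu : 0 < mu) (hne : lam ≠ mu) :
    ((m - 1) / m) * ((lam ^ m - mu ^ m) / (lam ^ (m - 1) - mu ^ (m - 1)))
      = ∫ α in (0:ℝ)..1, ((1 - α) * lam ^ (m - 1) + α * mu ^ (m - 1)) ^ (1 / (m - 1)) := by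
  have hm1' : m - 1 ≠ 0 := sub_ne_zero.mpr hm1
  have hexp : 1 / (m - 1) + 1 = m / (m - 1) := by field_simp; ring
  have hpow {x : ℝ} (hx : 0 < x) : (x ^ (m - 1)) ^ (1 / (m - 1) + 1) = x ^ m := by
    rw [hexp, ← Real.rpow_mul hx.le, mul_div_cancel₀ m hm1']
  have hne' : lam ^ (m - 1) ≠ mu ^ (m - 1) := (Real.rpow_left_inj hlam.le hmu.le hm1').not.mpr hne
  rw [integral_rpow_lineMap_unitInterval (Real.rpow_pos_of_pos hlam _)
    (Real.rpow_pos_of_pos hmu _) hne' (hexp ▸ div_ne_zero hm0 hm1'),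
    hpow hlam, hpow hmu, hexp, ← neg_sub (lam ^ m), ← neg_sub (lam ^ (m - 1))]
  field_simp
end

section
/- (Divergence form of the Lindblad generator.) Let σ be a positive definite density matrix, and suppose {V_j}_{j∈J} ⊆ M_n(ℂ) satisfies {V_j} = {V_j*} (as sets, with V_{j*} = V_j* and ω_{j*} = −ω_j) and σ V_j σ^{-1} = e^{-ω_j} V_j. Define ∂_j A = [V_j, A], the generator L A = Σ_j e^{-ω_j/2}(V_j*[A,V_j] + [V_j*,A]V_j), and the KMS adjoint ∂_{j,σ}† B = σ^{-1/2} ∂_j†(σ^{1/2} B σ^{1/2}) σ^{-1/2} where ∂_j† A = [V_j*, A]. Then L A = − Σ_j ∂_{j,σ}† ∂_j A for all A ∈ M_n(ℂ). -/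
open Matrix
open scoped ComplexOrder

lemma aux_comm {n : ℕ} {σ V : Matrix (Fin n) (Fin n) ℂ} (hσ : σ.PosDef) {c : ℝ}
    (hcomm : σ * V = (c:ℂ) • (V * σ)) (f : ℝ → ℝ) (κ : ℝ)
    (hf : ∀ x : ℝ, 0 < x → f (c * x) = κ * f x) :
    cfc f σ * V = (κ:ℂ) • (V * cfc f σ) := by
  have hH : σ.IsHermitian := hσ.1
  rw [hH.cfc_eq, Matrix.IsHermitian.cfc]
  set U : Matrix (Fin n) (Fin n) ℂ := (hH.eigenvectorUnitary : Matrix (Fin n) (Fin n) ℂ) with hUdef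
  have hU1 : star U * U = 1 := (Matrix.mem_unitaryGroup_iff').mp (hH.eigenvectorUnitary).2
  have hU2 : U * star U = 1 := (Matrix.mem_unitaryGroup_iff).mp (hH.eigenvectorUnitary).2
  set D : Matrix (Fin n) (Fin n) ℂ := diagonal (RCLike.ofReal ∘ hH.eigenvalues) with hDdef
  set W : Matrix (Fin n) (Fin n) ℂ := star U * V * U with hWdef
  set F : Matrix (Fin n) (Fin n) ℂ := diagonal (RCLike.ofReal ∘ f ∘ hH.eigenvalues) with hFdef
  have hσeq : σ = U * D * star U := hH.spectral_theorem
  have hDW : D * W = (c:ℂ) • (W * D) := by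
    calc D * W = star U * (σ * V) * U := by
          rw [hσeq, hWdef]
          simp only [mul_assoc]
          rw [← mul_assoc (star U) U, hU1, one_mul]
      _ = (c:ℂ) • (star U * (V * σ) * U) := by
          rw [hcomm, Matrix.mul_smul, Matrix.smul_mul]
      _ = (c:ℂ) • (W * D) := by
          rw [hσeq, hWdef]
          congr 1
          simp only [mul_assoc]
          rw [hU1, mul_one]
  have hFW : F * W = (κ:ℂ) • (W * F) := by
    ext k l
    have h1 := congrFun (congrFun (congrArg (fun M => fun i j => M i j) hDW) k) l
    simp only [hDdef, hFdef, Matrix.diagonal_mul, Matrix.mul_diagonal, Matrix.smul_apply,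
      Function.comp_apply, smul_eq_mul] at h1 ⊢
    have cast_eq : ∀ x : ℝ, (RCLike.ofReal x : ℂ) = Complex.ofReal x := fun x => rfl
    simp only [cast_eq] at h1 ⊢
    by_cases hW : W k l = 0
    · simp [hW]
    · have hevR : hH.eigenvalues k = c * hH.eigenvalues l := by
        have h2 : ((hH.eigenvalues k : ℝ) : ℂ) * W k l
            = ((c * hH.eigenvalues l : ℝ) : ℂ) * W k l := by
          push_cast
          rw [h1]; ring
        exact_mod_cast mul_right_cancel₀ hW h2
      have hfk : f (hH.eigenvalues k) = κ * f (hH.eigenvalues l) := by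
        rw [hevR]; exact hf _ (hσ.eigenvalues_pos l)
      rw [hfk]
      push_cast
      ring
  calc U * F * star U * V
      = U * (F * W) * star U := by
        rw [hWdef]
        simp only [mul_assoc]
        rw [hU2, mul_one]
    _ = (κ:ℂ) • (U * (W * F) * star U) := by
        rw [hFW, Matrix.mul_smul, Matrix.smul_mul]
    _ = (κ:ℂ) • (V * (U * F * star U)) := by
        rw [hWdef]
        congr 1
        simp only [mul_assoc]
        rw [← mul_assoc U (star U), hU2, one_mul]

lemma aux_one {n : ℕ} {σ : Matrix (Fin n) (Fin n) ℂ} (hσ : σ.PosDef)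
    (f g : ℝ → ℝ) (hfg : ∀ x : ℝ, 0 < x → f x * g x = 1) :
    cfc f σ * cfc g σ = 1 := by
  have hH : σ.IsHermitian := hσ.1
  rw [hH.cfc_eq, hH.cfc_eq, Matrix.IsHermitian.cfc, Matrix.IsHermitian.cfc]
  set U : Matrix (Fin n) (Fin n) ℂ := (hH.eigenvectorUnitary : Matrix (Fin n) (Fin n) ℂ)
  have hU1 : star U * U = 1 := (Matrix.mem_unitaryGroup_iff').mp (hH.eigenvectorUnitary).2
  have hU2 : U * star U = 1 := (Matrix.mem_unitaryGroup_iff).mp (hH.eigenvectorUnitary).2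
  have key : diagonal (RCLike.ofReal ∘ f ∘ hH.eigenvalues) *
      diagonal (RCLike.ofReal ∘ g ∘ hH.eigenvalues) = (1 : Matrix (Fin n) (Fin n) ℂ) := by
    rw [Matrix.diagonal_mul_diagonal, ← Matrix.diagonal_one, Matrix.diagonal_eq_diagonal_iff]
    intro i
    simp only [Function.comp_apply, Pi.one_apply]
    rw [← RCLike.ofReal_mul, hfg _ (hσ.eigenvalues_pos i), RCLike.ofReal_one]
  calc U * diagonal (RCLike.ofReal ∘ f ∘ hH.eigenvalues) * star U *
        (U * diagonal (RCLike.ofReal ∘ g ∘ hH.eigenvalues) * star U)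
      = U * (diagonal (RCLike.ofReal ∘ f ∘ hH.eigenvalues) * (star U * U) *
          diagonal (RCLike.ofReal ∘ g ∘ hH.eigenvalues)) * star U := by
        simp only [mul_assoc]
    _ = 1 := by rw [hU1, mul_one, key, mul_one, hU2]

/-- Divergence form of the Lindblad generator: if `σ` is a positive definite density
matrix, `{V_j} = {V_j*}` (via an involution `j ↦ j*` with `V_{j*} = V_j*`, `ω_{j*} = −ω_j`)
and `σ V_j σ⁻¹ = e^{-ω_j} V_j`, then with `∂_j A = [V_j, A]`, `∂_j† A = [V_j*, A]` and the
KMS adjoint `∂_{j,σ}† B = σ^{-1/2} ∂_j†(σ^{1/2} B σ^{1/2}) σ^{-1/2}`, the generator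
`L A = Σ_j e^{-ω_j/2}(V_j*[A,V_j] + [V_j*,A]V_j)` satisfies `L A = − Σ_j ∂_{j,σ}† ∂_j A`. -/
theorem stmt_12 (n : ℕ) (J : Type*) [Fintype J]
    (σ : Matrix (Fin n) (Fin n) ℂ) (hσ : σ.PosDef) (htr : σ.trace = 1)
    (V : J → Matrix (Fin n) (Fin n) ℂ) (ω : J → ℝ) (inv : J → J)
    (hinv : ∀ j, inv (inv j) = j)
    (hVs : ∀ j, V (inv j) = (V j)ᴴ)
    (hωs : ∀ j, ω (inv j) = -(ω j))
    (heig : ∀ j, σ * V j * σ⁻¹ = (Real.exp (-(ω j)) : ℂ) • V j)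
    (A : Matrix (Fin n) (Fin n) ℂ) :
    ∀ S Si : Matrix (Fin n) (Fin n) ℂ,
      S = cfc (fun x : ℝ => x ^ ((2:ℝ)⁻¹)) σ →
      Si = cfc (fun x : ℝ => x ^ (-(2:ℝ)⁻¹)) σ →
      ∑ j, (Real.exp (-(ω j) / 2) : ℂ) •
          ((V j)ᴴ * (A * V j - V j * A) + ((V j)ᴴ * A - A * (V j)ᴴ) * V j)
        = - ∑ j,
            Si * ((V j)ᴴ * (S * (V j * A - A * V j) * S)
                    - (S * (V j * A - A * V j) * S) * (V j)ᴴ) * Si := by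
  intro S Si hS hSi
  have hdet : IsUnit σ.det := isUnit_iff_ne_zero.mpr (ne_of_gt hσ.det_pos)
  have hinvσ : σ⁻¹ * σ = 1 := Matrix.nonsing_inv_mul σ hdet
  have hcomm : ∀ j, σ * V j = ((Real.exp (-(ω j)) : ℝ) : ℂ) • (V j * σ) := by
    intro j
    have h := congrArg (fun M => M * σ) (heig j)
    simp only [Matrix.smul_mul] at h
    calc σ * V j = σ * V j * (σ⁻¹ * σ) := by rw [hinvσ, mul_one]
      _ = ((Real.exp (-(ω j)) : ℝ) : ℂ) • (V j * σ) := by rw [← mul_assoc, h]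
  have hfS : ∀ j, ∀ x : ℝ, 0 < x →
      (Real.exp (-(ω j)) * x) ^ ((2:ℝ)⁻¹) = Real.exp (-(ω j)/2) * x ^ ((2:ℝ)⁻¹) := by
    intro j x hx
    rw [Real.mul_rpow (Real.exp_pos _).le hx.le, ← Real.exp_mul,
      show (-(ω j)) * (2:ℝ)⁻¹ = -(ω j)/2 by ring]
  have hfSi : ∀ j, ∀ x : ℝ, 0 < x →
      (Real.exp (-(ω j)) * x) ^ (-(2:ℝ)⁻¹) = Real.exp (ω j/2) * x ^ (-(2:ℝ)⁻¹) := by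
    intro j x hx
    rw [Real.mul_rpow (Real.exp_pos _).le hx.le, ← Real.exp_mul,
      show (-(ω j)) * -(2:ℝ)⁻¹ = ω j/2 by ring]
  have hSV : ∀ j, S * V j = ((Real.exp (-(ω j)/2) : ℝ) : ℂ) • (V j * S) := by
    intro j; rw [hS]; exact aux_comm hσ (hcomm j) _ _ (hfS j)
  have hSiV : ∀ j, Si * V j = ((Real.exp (ω j / 2) : ℝ) : ℂ) • (V j * Si) := by
    intro j; rw [hSi]; exact aux_comm hσ (hcomm j) _ _ (hfSi j)
  have hSVh : ∀ j, S * (V j)ᴴ = ((Real.exp (ω j / 2) : ℝ) : ℂ) • ((V j)ᴴ * S) := by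
    intro j
    have h := hSV (inv j)
    rw [hVs j, hωs j, neg_neg] at h
    exact h
  have hSiVh : ∀ j, Si * (V j)ᴴ = ((Real.exp (-(ω j) / 2) : ℝ) : ℂ) • ((V j)ᴴ * Si) := by
    intro j
    have h := hSiV (inv j)
    rw [hVs j, hωs j] at h
    exact h
  have hSSi : S * Si = 1 := by
    rw [hS, hSi]
    exact aux_one hσ _ _ (fun x hx => by
      rw [← Real.rpow_add hx, show (2:ℝ)⁻¹ + -(2:ℝ)⁻¹ = 0 by ring, Real.rpow_zero])
  have hSiS : Si * S = 1 := by
    rw [hS, hSi]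
    exact aux_one hσ _ _ (fun x hx => by
      rw [← Real.rpow_add hx, show -(2:ℝ)⁻¹ + (2:ℝ)⁻¹ = 0 by ring, Real.rpow_zero])
  have k1 : ∀ j, Si * (V j)ᴴ * S = ((Real.exp (-(ω j) / 2) : ℝ) : ℂ) • (V j)ᴴ := by
    intro j
    rw [hSiVh j, Matrix.smul_mul, mul_assoc, hSiS, mul_one]
  have k2 : ∀ j, S * (V j)ᴴ * Si = ((Real.exp (ω j / 2) : ℝ) : ℂ) • (V j)ᴴ := by
    intro j
    rw [hSVh j, Matrix.smul_mul, mul_assoc, hSSi, mul_one]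
  have hterm : ∀ j,
      Si * ((V j)ᴴ * (S * (V j * A - A * V j) * S)
        - (S * (V j * A - A * V j) * S) * (V j)ᴴ) * Si
      = ((Real.exp (-(ω j) / 2) : ℝ) : ℂ) • ((V j)ᴴ * (V j * A - A * V j))
        - ((Real.exp (ω j / 2) : ℝ) : ℂ) • ((V j * A - A * V j) * (V j)ᴴ) := by
    intro j
    have e1 : Si * ((V j)ᴴ * (S * (V j * A - A * V j) * S)) * Si
        = ((Real.exp (-(ω j) / 2) : ℝ) : ℂ) • ((V j)ᴴ * (V j * A - A * V j)) := by
      have h : Si * ((V j)ᴴ * (S * (V j * A - A * V j) * S)) * Si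
          = (Si * (V j)ᴴ * S) * (V j * A - A * V j) * (S * Si) := by
        simp only [mul_assoc]
      rw [h, k1, hSSi, mul_one, Matrix.smul_mul]
    have e2 : Si * ((S * (V j * A - A * V j) * S) * (V j)ᴴ) * Si
        = ((Real.exp (ω j / 2) : ℝ) : ℂ) • ((V j * A - A * V j) * (V j)ᴴ) := by
      have h : Si * ((S * (V j * A - A * V j) * S) * (V j)ᴴ) * Si
          = (Si * S) * ((V j * A - A * V j) * (S * (V j)ᴴ * Si)) := by
        simp only [mul_assoc]
      rw [h, hSiS, one_mul, k2, Matrix.mul_smul]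
    rw [Matrix.mul_sub, Matrix.sub_mul, e1, e2]
  have hR : (∑ j, Si * ((V j)ᴴ * (S * (V j * A - A * V j) * S)
        - (S * (V j * A - A * V j) * S) * (V j)ᴴ) * Si)
      = ∑ j, (((Real.exp (-(ω j) / 2) : ℝ) : ℂ) • ((V j)ᴴ * (V j * A - A * V j))
        - ((Real.exp (ω j / 2) : ℝ) : ℂ) • ((V j * A - A * V j) * (V j)ᴴ)) :=
    Finset.sum_congr rfl fun j _ => hterm j
  have hL : ∀ j, (Real.exp (-(ω j) / 2) : ℂ) •
        ((V j)ᴴ * (A * V j - V j * A) + ((V j)ᴴ * A - A * (V j)ᴴ) * V j)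
      = ((Real.exp (-(ω j) / 2) : ℝ) : ℂ) • (((V j)ᴴ * A - A * (V j)ᴴ) * V j)
        - ((Real.exp (-(ω j) / 2) : ℝ) : ℂ) • ((V j)ᴴ * (V j * A - A * V j)) := by
    intro j
    have h : (V j)ᴴ * (A * V j - V j * A)
        = -((V j)ᴴ * (V j * A - A * V j)) := by noncomm_ring
    rw [h, smul_add, smul_neg, neg_add_eq_sub]
  rw [hR, Finset.sum_sub_distrib, neg_sub, Finset.sum_congr rfl fun j _ => hL j,
    Finset.sum_sub_distrib]
  congr 1
  have hbij : Function.Bijective inv :=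
    Function.Involutive.bijective hinv
  exact Fintype.sum_bijective inv hbij _ _ (fun j => by
    rw [hωs j, hVs j, conjTranspose_conjTranspose])
end

section
/- (Gradient flow identity.) Under the hypotheses of the divergence form representation (V_j eigenvectors of the modular operator of σ with eigenvalues e^{-ω_j}, {V_j} = {V_j*}, ω_{j*} = −ω_j), define ρ̂_j = ∫₀¹ (e^{ω_j/2}ρ)^{1−s} ⊗ (e^{-ω_j/2}ρ)^{s} ds and K_ρ A = Σ_j ∂_j†(ρ̂_j # ∂_j A) with ∂_j A = [V_j, A], ∂_j† A = [V_j*, A]. Then for every positive definite density matrix ρ: K_ρ(log ρ − log σ) = − L† ρ, where L† ρ = Σ_j e^{-ω_j/2}([V_j, ρ V_j*] + [V_j ρ, V_j*]). -/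
open Matrix
open scoped ComplexOrder

/-! In eigenbases of positive definite `A` and `B`, the matrix `A^{1-s} X B^s` has entries
`α_p^{1-s} W_pq β_q^s`, and differentiating in `s` shows that `A^{1-s} (X log B - log A X) B^s` is
its derivative; so `∫₀¹ A^{1-s} (X log B - log A X) B^s ds = X B - A X`.
For `A = e^{ω/2} ρ` and `B = e^{-ω/2} ρ` the middle factor is `[V, log ρ] - ω V`, which is
`[V, log ρ - log σ]` because `σ V σ⁻¹ = e^{-ω} V` forces `[log σ, V] = -ω V` (compare entries
in an eigenbasis of `σ`). Hence `ρ̂_j # ∂_j (log ρ - log σ) = e^{-ω_j/2} V_j ρ - e^{ω_j/2} ρ V_j`,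
and after reindexing half of the sum by `j ↦ j*` the sum of the `∂_j†` of these is `-L†ρ`. -/

lemma hasDerivAt_rpow_one_sub_mul_rpow {a b : ℝ} (ha : 0 < a) (hb : 0 < b) (s : ℝ) :
    HasDerivAt (fun s : ℝ => a ^ (1 - s) * b ^ s)
      (a ^ (1 - s) * b ^ s * (Real.log b - Real.log a)) s :=
  ((((hasDerivAt_id s).const_sub 1).const_rpow ha).mul
    ((hasDerivAt_id s).const_rpow hb)).congr_deriv (by simp only [id]; ring)

lemma integral_rpow_one_sub_mul_rpow_mul_log_sub {a b : ℝ} (ha : 0 < a) (hb : 0 < b) :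
    ∫ s in (0:ℝ)..1, a ^ (1 - s) * b ^ s * (Real.log b - Real.log a) = b - a := by
  rw [intervalIntegral.integral_eq_sub_of_hasDerivAt
    (fun s _ => hasDerivAt_rpow_one_sub_mul_rpow ha hb s)
    ((by fun_prop (disch := positivity) : Continuous _).intervalIntegrable 0 1)]
  simp

lemma Matrix.of_intervalIntegral_mul_mul {l m n o : Type*} [Fintype m] [Fintype n]
    (U : Matrix l m ℂ) (U' : Matrix n o ℂ) (M : ℝ → Matrix m n ℂ) {a b : ℝ}
    (hM : ∀ p q, IntervalIntegrable (fun s => M s p q) MeasureTheory.volume a b) :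
    of (fun i k => ∫ s in a..b, (U * M s * U') i k)
      = U * of (fun p q => ∫ s in a..b, M s p q) * U' := by
  ext i k
  have hint : ∀ p q,
      IntervalIntegrable (fun s => U i p * M s p q * U' q k) MeasureTheory.volume a b :=
    fun p q => ((hM p q).const_mul _).mul_const _
  simp only [of_apply, mul_apply, Finset.sum_mul]
  rw [intervalIntegral.integral_finsetSum fun q _ => by
    simpa only [Finset.sum_fn] using IntervalIntegrable.sum Finset.univ fun p _ => hint p q]
  refine Finset.sum_congr rfl fun q _ => ?_
  rw [intervalIntegral.integral_finsetSum fun p _ => hint p q]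
  simp only [intervalIntegral.integral_mul_const, intervalIntegral.integral_const_mul]

lemma Unitary.star_mul_conj_mul {R : Type*} [Monoid R] [StarMul R] (U V : unitary R) (N : R) :
    star (U : R) * (U * N * star (V : R)) * V = N :=
  calc star (U : R) * (U * N * star (V : R)) * V
        = (star (U : R) * U) * N * (star (V : R) * V) := by
        simp only [mul_assoc]
    _ = N := by
        rw [Unitary.star_mul_self_of_mem U.2, Unitary.star_mul_self_of_mem V.2, one_mul, mul_one]

lemma Unitary.conj_star_mul_mul {R : Type*} [Monoid R] [StarMul R] (U V : unitary R) (N : R) :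
    (U : R) * (star (U : R) * N * V) * star (V : R) = N :=
  calc (U : R) * (star (U : R) * N * V) * star (V : R)
        = (U * star (U : R)) * N * (V * star (V : R)) := by
        simp only [mul_assoc]
    _ = N := by
        rw [Unitary.mul_star_self_of_mem U.2, Unitary.mul_star_self_of_mem V.2, one_mul, mul_one]

section

variable {m : Type*} [Fintype m] [DecidableEq m]

namespace Matrix.IsHermitian

lemma cfc_eq_conj_diagonal {A : Matrix m m ℂ} (hA : A.IsHermitian) (f : ℝ → ℝ) :
    cfc f A = (hA.eigenvectorUnitary : Matrix m m ℂ) *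
      diagonal (fun i => (f (hA.eigenvalues i) : ℂ)) *
      star (hA.eigenvectorUnitary : Matrix m m ℂ) := by
  rw [hA.cfc_eq]; rfl

lemma cfc_mul_mul_cfc {A B : Matrix m m ℂ} (hA : A.IsHermitian) (hB : B.IsHermitian)
    (f g : ℝ → ℝ) (X : Matrix m m ℂ) :
    cfc f A * X * cfc g B = (hA.eigenvectorUnitary : Matrix m m ℂ) *
      (diagonal (fun i => (f (hA.eigenvalues i) : ℂ)) *
        (star (hA.eigenvectorUnitary : Matrix m m ℂ) * X * hB.eigenvectorUnitary) *
        diagonal (fun i => (g (hB.eigenvalues i) : ℂ))) *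
      star (hB.eigenvectorUnitary : Matrix m m ℂ) := by
  rw [hA.cfc_eq_conj_diagonal, hB.cfc_eq_conj_diagonal]
  simp only [mul_assoc]

lemma mul_cfc_sub_cfc_mul {A B : Matrix m m ℂ} (hA : A.IsHermitian) (hB : B.IsHermitian)
    (f g : ℝ → ℝ) (X : Matrix m m ℂ) :
    X * cfc g B - cfc f A * X = (hA.eigenvectorUnitary : Matrix m m ℂ) *
      ((star (hA.eigenvectorUnitary : Matrix m m ℂ) * X *
          (hB.eigenvectorUnitary : Matrix m m ℂ)) ⊙
        of fun p q => ((g (hB.eigenvalues q) - f (hA.eigenvalues p) : ℝ) : ℂ)) *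
      star (hB.eigenvectorUnitary : Matrix m m ℂ) := by
  have h1 := cfc_mul_mul_cfc hA hB (fun _ => 1) g X
  have h2 := cfc_mul_mul_cfc hA hB f (fun _ => 1) X
  rw [cfc_const_one ℝ A, one_mul] at h1
  rw [cfc_const_one ℝ B, mul_one] at h2
  rw [h1, h2, ← sub_mul, ← mul_sub]
  congr 2
  ext p q
  simp only [sub_apply, mul_diagonal, diagonal_mul, hadamard_apply, of_apply]
  push_cast
  ring

lemma cfc_comp_smul {A : Matrix m m ℂ} (hA : A.IsHermitian) (r : ℝ)
    (f : ℝ → ℝ) : cfc (fun x => f (r * x)) A = cfc f (r • A) :=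
  _root_.cfc_comp_smul r f A ((finite_real_spectrum.image _).continuousOn _) hA

end Matrix.IsHermitian

theorem Matrix.PosDef.of_intervalIntegral_cfc_rpow_mul_mul_cfc_rpow {A B : Matrix m m ℂ}
    (hA : A.PosDef) (hB : B.PosDef) (X : Matrix m m ℂ) :
    of (fun i k => ∫ s in (0:ℝ)..1, (cfc (fun x : ℝ => x ^ (1 - s)) A *
        (X * cfc Real.log B - cfc Real.log A * X) * cfc (fun x : ℝ => x ^ s) B) i k)
      = X * B - A * X := by
  set UA := hA.1.eigenvectorUnitary
  set UB := hB.1.eigenvectorUnitary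
  set W := star (UA : Matrix m m ℂ) * X * UB
  set α := hA.1.eigenvalues
  set β := hB.1.eigenvalues
  have hα : ∀ p, 0 < α p := hA.eigenvalues_pos
  have hβ : ∀ q, 0 < β q := hB.eigenvalues_pos
  have hintegrand : ∀ s : ℝ, cfc (fun x : ℝ => x ^ (1 - s)) A *
      (X * cfc Real.log B - cfc Real.log A * X) * cfc (fun x : ℝ => x ^ s) B
      = UA * (W ⊙ of fun p q =>
        ((α p ^ (1 - s) * β q ^ s * (Real.log (β q) - Real.log (α p)) : ℝ) : ℂ)) *
        star (UB : Matrix m m ℂ) := by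
    intro s
    rw [hA.1.mul_cfc_sub_cfc_mul hB.1, hA.1.cfc_mul_mul_cfc hB.1, Unitary.star_mul_conj_mul]
    congr 2
    ext p q
    simp only [mul_diagonal, diagonal_mul, hadamard_apply, of_apply]
    push_cast
    ring
  have hend : X * B - A * X
      = UA * (W ⊙ of fun p q => ((β q - α p : ℝ) : ℂ)) * star (UB : Matrix m m ℂ) := by
    rw [← cfc_id' ℝ A hA.1.isSelfAdjoint, ← cfc_id' ℝ B hB.1.isSelfAdjoint]
    exact hA.1.mul_cfc_sub_cfc_mul hB.1 (fun x => x) (fun x => x) X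
  simp_rw [hintegrand]
  rw [of_intervalIntegral_mul_mul, hend]
  · congr 2
    ext p q
    simp only [hadamard_apply, of_apply, intervalIntegral.integral_const_mul,
      intervalIntegral.integral_ofReal, integral_rpow_one_sub_mul_rpow_mul_log_sub (hα p) (hβ q)]
  · intro p q
    have := (hα p).ne'
    have := (hβ q).ne'
    simp only [hadamard_apply, of_apply]
    exact Continuous.intervalIntegrable (by fun_prop (disch := assumption)) _ _

lemma Matrix.PosDef.cfc_log_smul {A : Matrix m m ℂ} (hA : A.PosDef) {r : ℝ} (hr : 0 < r) :
    cfc Real.log (r • A) = algebraMap ℝ _ (Real.log r) + cfc Real.log A :=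
  calc cfc Real.log (r • A) = cfc (fun x => Real.log (r * x)) A := (hA.1.cfc_comp_smul r _).symm
    _ = cfc (fun x => Real.log r + Real.log x) A := cfc_congr fun x hx => by
        obtain ⟨i, rfl⟩ := hA.1.spectrum_real_eq_range_eigenvalues ▸ hx
        exact Real.log_mul hr.ne' (hA.eigenvalues_pos i).ne'
    _ = _ := cfc_const_add _ _ _ (finite_real_spectrum.continuousOn _) hA.1

theorem Matrix.PosDef.cfc_log_mul_sub_mul_cfc_log_of_conj_eq_smul {σ X : Matrix m m ℂ}
    (hσ : σ.PosDef) {c : ℝ} (hc : 0 < c) (h : σ * X * σ⁻¹ = (c : ℂ) • X) :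
    cfc Real.log σ * X - X * cfc Real.log σ = (Real.log c : ℂ) • X := by
  have hσX : σ * X = (c : ℂ) • (X * σ) := by
    rw [← smul_mul_assoc, ← h,
      nonsing_inv_mul_cancel_right _ _ ((isUnit_iff_isUnit_det σ).mp hσ.isUnit)]
  have hcomm : X * cfc (fun x : ℝ => c * x) σ - cfc (fun x : ℝ => x) σ * X = 0 := by
    rw [cfc_const_mul_id c σ hσ.1.isSelfAdjoint, cfc_id' ℝ σ hσ.1.isSelfAdjoint,
      mul_smul_comm, hσX, Complex.coe_smul, sub_self]
  rw [hσ.1.mul_cfc_sub_cfc_mul hσ.1] at hcomm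
  set U := hσ.1.eigenvectorUnitary
  set W := star (U : Matrix m m ℂ) * X * U
  set μ := hσ.1.eigenvalues
  have hW : ∀ p q, W p q * ((c * μ q - μ p : ℝ) : ℂ) = 0 := fun p q => by
    have h0 := congrArg (fun M => star (U : Matrix m m ℂ) * M * U) hcomm
    rw [Unitary.star_mul_conj_mul, mul_zero, zero_mul] at h0
    simpa only [hadamard_apply, of_apply, zero_apply] using congrFun₂ h0 p q
  have hlog : W ⊙ (of fun p q => ((Real.log (μ q) - Real.log (μ p) : ℝ) : ℂ))
      = ((-Real.log c : ℝ) : ℂ) • W := by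
    ext p q
    simp only [hadamard_apply, of_apply, smul_apply, smul_eq_mul]
    rcases mul_eq_zero.mp (hW p q) with h0 | h0
    · simp [h0]
    · have hμ : μ p = c * μ q := (sub_eq_zero.mp (Complex.ofReal_eq_zero.mp h0)).symm
      rw [hμ, Real.log_mul hc.ne' (hσ.eigenvalues_pos q).ne']
      push_cast
      ring
  rw [← neg_sub, hσ.1.mul_cfc_sub_cfc_mul hσ.1, hlog, mul_smul_comm, smul_mul_assoc,
    Unitary.conj_star_mul_mul, ← neg_smul]
  push_cast
  rw [neg_neg]

lemma sum_conjTranspose_commutator_eq_neg_lindblad {J : Type*} [Fintype J] (ρ : Matrix m m ℂ)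
    (V : J → Matrix m m ℂ) (ω : J → ℝ) (inv : J → J) (hinv : Function.Involutive inv)
    (hVs : ∀ j, V (inv j) = (V j)ᴴ) (hωs : ∀ j, ω (inv j) = -(ω j)) :
    ∑ j, ((V j)ᴴ * ((Real.exp (-(ω j) / 2) : ℂ) • (V j * ρ) - (Real.exp (ω j / 2) : ℂ) • (ρ * V j))
        - ((Real.exp (-(ω j) / 2) : ℂ) • (V j * ρ) - (Real.exp (ω j / 2) : ℂ) • (ρ * V j))
          * (V j)ᴴ)
      = - ∑ j, (Real.exp (-(ω j) / 2) : ℂ) •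
            ((V j * (ρ * (V j)ᴴ) - (ρ * (V j)ᴴ) * V j)
              + ((V j * ρ) * (V j)ᴴ - (V j)ᴴ * (V j * ρ))) := by
  have hreindex :
      ∑ j, (Real.exp (ω j / 2) : ℂ) • ((V j)ᴴ * (ρ * V j) - (ρ * V j) * (V j)ᴴ)
      = ∑ j, (Real.exp (-(ω j) / 2) : ℂ) • (V j * (ρ * (V j)ᴴ) - (ρ * (V j)ᴴ) * V j) :=
    Fintype.sum_bijective inv hinv.bijective _ _ fun j => by
      rw [hωs, hVs, neg_neg, conjTranspose_conjTranspose]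
  calc _ = ∑ j, ((Real.exp (-(ω j) / 2) : ℂ) • ((V j)ᴴ * (V j * ρ) - (V j * ρ) * (V j)ᴴ)
          - (Real.exp (ω j / 2) : ℂ) • ((V j)ᴴ * (ρ * V j) - (ρ * V j) * (V j)ᴴ)) := by
        refine Finset.sum_congr rfl fun j _ => ?_
        simp only [mul_sub, sub_mul, mul_smul_comm, smul_mul_assoc, smul_sub]
        abel
    _ = _ := by
        rw [Finset.sum_sub_distrib, hreindex, ← Finset.sum_sub_distrib,
          ← Finset.sum_neg_distrib]
        refine Finset.sum_congr rfl fun j _ => ?_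
        rw [← smul_sub, ← smul_neg]
        congr 1
        noncomm_ring

end

theorem stmt_13_general (n : ℕ) (J : Type*) [Fintype J]
    (σ ρ : Matrix (Fin n) (Fin n) ℂ) (hσ : σ.PosDef) (hρ : ρ.PosDef)
    (V : J → Matrix (Fin n) (Fin n) ℂ) (ω : J → ℝ) (inv : J → J)
    (hinv : ∀ j, inv (inv j) = j)
    (hVs : ∀ j, V (inv j) = (V j)ᴴ)
    (hωs : ∀ j, ω (inv j) = -(ω j))
    (heig : ∀ j, σ * V j * σ⁻¹ = (Real.exp (-(ω j)) : ℂ) • V j)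
    -- `pw c t = (e^c ρ)^t`, defined by functional calculus
    (pw : ℝ → ℝ → Matrix (Fin n) (Fin n) ℂ)
    (hpw : ∀ c t, pw c t = cfc (fun x : ℝ => (Real.exp c * x) ^ t) ρ)
    -- `hash j C = ρ̂_j # C = ∫₀¹ (e^{ω_j/2}ρ)^{1−s} C (e^{−ω_j/2}ρ)^{s} ds`
    (hash : J → Matrix (Fin n) (Fin n) ℂ → Matrix (Fin n) (Fin n) ℂ)
    (hhash : ∀ j C, hash j C = Matrix.of fun i k =>
        ∫ s in (0:ℝ)..1, (pw (ω j / 2) (1 - s) * C * pw (-(ω j) / 2) s) i k) :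
    (∑ j, ((V j)ᴴ * hash j (V j * (cfc Real.log ρ - cfc Real.log σ)
                              - (cfc Real.log ρ - cfc Real.log σ) * V j)
            - hash j (V j * (cfc Real.log ρ - cfc Real.log σ)
                              - (cfc Real.log ρ - cfc Real.log σ) * V j) * (V j)ᴴ))
      = - ∑ j, (Real.exp (-(ω j) / 2) : ℂ) •
            ((V j * (ρ * (V j)ᴴ) - (ρ * (V j)ᴴ) * V j)
              + ((V j * ρ) * (V j)ᴴ - (V j)ᴴ * (V j * ρ))) := by
  set L := cfc Real.log ρ - cfc Real.log σ with hL
  have hlogσ : ∀ j, cfc Real.log σ * V j - V j * cfc Real.log σ = (-ω j) • V j := fun j => by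
    simpa [Complex.coe_smul] using
      hσ.cfc_log_mul_sub_mul_cfc_log_of_conj_eq_smul (Real.exp_pos _) (heig j)
  have hpow : ∀ c t, pw c t = cfc (fun x : ℝ => x ^ t) (Real.exp c • ρ) := fun c t => by
    rw [hpw]
    exact hρ.1.cfc_comp_smul (Real.exp c) (fun x : ℝ => x ^ t)
  have hcomm : ∀ j, V j * L - L * V j = V j * cfc Real.log (Real.exp (-(ω j) / 2) • ρ)
      - cfc Real.log (Real.exp (ω j / 2) • ρ) * V j := fun j => by
    rw [hρ.cfc_log_smul (Real.exp_pos _), hρ.cfc_log_smul (Real.exp_pos _), Real.log_exp,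
      Real.log_exp, Algebra.algebraMap_eq_smul_one, Algebra.algebraMap_eq_smul_one]
    calc _ = V j * cfc Real.log ρ - cfc Real.log ρ * V j
          + (cfc Real.log σ * V j - V j * cfc Real.log σ) := by rw [hL]; noncomm_ring
      _ = _ := by
        rw [hlogσ]
        simp only [mul_add, add_mul, mul_smul_comm, smul_mul_assoc, mul_one, one_mul]
        module
  have hhashV : ∀ j, hash j (V j * L - L * V j)
      = (Real.exp (-(ω j) / 2) : ℂ) • (V j * ρ) - (Real.exp (ω j / 2) : ℂ) • (ρ * V j) :=
    fun j => by
      have hpos : ∀ c, (Real.exp c • ρ).PosDef := fun c => hρ.smul (Real.exp_pos c)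
      simp only [hhash, hcomm, hpow]
      rw [(hpos _).of_intervalIntegral_cfc_rpow_mul_mul_cfc_rpow (hpos _)]
      simp only [mul_smul_comm, smul_mul_assoc, Complex.coe_smul]
  simp only [hhashV]
  exact sum_conjTranspose_commutator_eq_neg_lindblad ρ V ω inv hinv hVs hωs

/-- Gradient flow identity: under the detailed balance hypotheses (`V_j` eigenvectors of the
modular operator of `σ` with eigenvalues `e^{-ω_j}`, `{V_j} = {V_j*}`, `ω_{j*} = −ω_j`), with
`ρ̂_j = ∫₀¹ (e^{ω_j/2}ρ)^{1−s} ⊗ (e^{−ω_j/2}ρ)^{s} ds`, `∂_j A = [V_j,A]`, `∂_j† A = [V_j*,A]`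
and `K_ρ A = Σ_j ∂_j†(ρ̂_j # ∂_j A)`, every positive definite density matrix `ρ` satisfies
`K_ρ(log ρ − log σ) = − L†ρ` where `L†ρ = Σ_j e^{-ω_j/2}([V_j, ρV_j*] + [V_jρ, V_j*])`. -/
theorem stmt_13 (n : ℕ) (J : Type*) [Fintype J]
    (σ ρ : Matrix (Fin n) (Fin n) ℂ) (hσ : σ.PosDef) (hρ : ρ.PosDef)
    (htrσ : σ.trace = 1) (htrρ : ρ.trace = 1)
    (V : J → Matrix (Fin n) (Fin n) ℂ) (ω : J → ℝ) (inv : J → J)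
    (hinv : ∀ j, inv (inv j) = j)
    (hVs : ∀ j, V (inv j) = (V j)ᴴ)
    (hωs : ∀ j, ω (inv j) = -(ω j))
    (heig : ∀ j, σ * V j * σ⁻¹ = (Real.exp (-(ω j)) : ℂ) • V j)
    -- `pw c t = (e^c ρ)^t`, defined by functional calculus
    (pw : ℝ → ℝ → Matrix (Fin n) (Fin n) ℂ)
    (hpw : ∀ c t, pw c t = cfc (fun x : ℝ => (Real.exp c * x) ^ t) ρ)
    -- `hash j C = ρ̂_j # C = ∫₀¹ (e^{ω_j/2}ρ)^{1−s} C (e^{−ω_j/2}ρ)^{s} ds`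
    (hash : J → Matrix (Fin n) (Fin n) ℂ → Matrix (Fin n) (Fin n) ℂ)
    (hhash : ∀ j C, hash j C = Matrix.of fun i k =>
        ∫ s in (0:ℝ)..1, (pw (ω j / 2) (1 - s) * C * pw (-(ω j) / 2) s) i k) :
    (∑ j, ((V j)ᴴ * hash j (V j * (cfc Real.log ρ - cfc Real.log σ)
                              - (cfc Real.log ρ - cfc Real.log σ) * V j)
            - hash j (V j * (cfc Real.log ρ - cfc Real.log σ)
                              - (cfc Real.log ρ - cfc Real.log σ) * V j) * (V j)ᴴ))
      = - ∑ j, (Real.exp (-(ω j) / 2) : ℂ) •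
            ((V j * (ρ * (V j)ᴴ) - (ρ * (V j)ᴴ) * V j)
              + ((V j * ρ) * (V j)ᴴ - (V j)ᴴ * (V j * ρ))) :=
  stmt_13_general n J σ ρ hσ hρ V ω inv hinv hVs hωs heig pw hpw hash hhash
end

section
/- Let σ be a positive definite density matrix and define M(A) = ∫₀¹ σ^{1−s} A σ^s ds on M_n(ℂ). Then M is invertible with inverse M^{-1}(A) = ∫₀^∞ (t+σ)^{-1} A (t+σ)^{-1} dt, and the map A ↦ M^{-1}(σ^{1/2} A σ^{1/2}) = ∫₀^∞ (σ^{1/2}/(t+σ)) A (σ^{1/2}/(t+σ)) dt is completely positive and unital (it maps the identity to the identity). -/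
/-!
In an eigenbasis of `σ` (eigenvalues `λᵢ > 0`) every map `X ↦ ∫ f_s(σ) X g_s(σ) ds` is the Schur
multiplier `Xᵢⱼ ↦ (∫ f_s(λᵢ) g_s(λⱼ) ds) Xᵢⱼ`. For `M` this kernel is the logarithmic mean
`(λⱼ - λᵢ) / (log λⱼ - log λᵢ)`, for the resolvent integral it is its reciprocal, so the two maps
are mutually inverse. Since `σ^{1/2}` commutes with `(t + σ)⁻¹`, the map
`A ↦ M⁻¹(σ^{1/2} A σ^{1/2})` is `∫ W_t A W_t* dt` with `W_t = σ^{1/2} (t + σ)⁻¹`, an integral of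
conjugations and hence completely positive; at `A = 1` its kernel on the diagonal is
`λᵢ⁻¹ · λᵢ = 1`.
-/

open Matrix MeasureTheory Set Filter Real Unitary
open scoped ComplexOrder Kronecker

namespace Matrix

lemma kronecker_one_mul_mul_conjTranspose_apply {m k R : Type*} [Fintype m] [Fintype k]
    [DecidableEq k] [CommSemiring R] [StarRing R] (W : Matrix m m R)
    (B : Matrix (m × k) (m × k) R) (p q : m × k) :
    ((W ⊗ₖ (1 : Matrix k k R)) * B * (W ⊗ₖ (1 : Matrix k k R))ᴴ) p q =
      (W * (of fun i j => B (i, p.2) (j, q.2)) * Wᴴ) p.1 q.1 := by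
  simp only [mul_apply, kroneckerMap_apply, one_apply, conjTranspose_apply, Fintype.sum_prod_type,
    Finset.sum_mul, of_apply, mul_ite, ite_mul, mul_one, mul_zero, zero_mul, apply_ite star,
    star_zero, Finset.sum_ite_eq, Finset.mem_univ, if_true]

section EntrywiseIntegral

variable {α m m' 𝕜 : Type*} [MeasurableSpace α] {μ : Measure α} [Fintype m] [Fintype m']
  [DecidableEq m] [DecidableEq m'] [RCLike 𝕜]

lemma linearMap_apply_eq_sum (L : Matrix m m' 𝕜 →ₗ[𝕜] 𝕜) (N : Matrix m m' 𝕜) :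
    L N = ∑ a, ∑ b, N a b * L (single a b 1) := by
  conv_lhs => rw [matrix_eq_sum_single N]
  simp only [map_sum]
  refine Finset.sum_congr rfl fun a _ => Finset.sum_congr rfl fun b _ => ?_
  rw [← smul_eq_mul, ← map_smul, smul_single, smul_eq_mul, mul_one]

lemma integrable_linearMap (L : Matrix m m' 𝕜 →ₗ[𝕜] 𝕜) {N : α → Matrix m m' 𝕜}
    (hN : ∀ a b, Integrable (fun t => N t a b) μ) : Integrable (fun t => L (N t)) μ := by
  rw [funext fun t => linearMap_apply_eq_sum L (N t)]
  exact integrable_finsetSum _ fun a _ => integrable_finsetSum _ fun b _ => (hN a b).mul_const _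

lemma integral_linearMap (L : Matrix m m' 𝕜 →ₗ[𝕜] 𝕜) {N : α → Matrix m m' 𝕜}
    (hN : ∀ a b, Integrable (fun t => N t a b) μ) :
    ∫ t, L (N t) ∂μ = L (of fun a b => ∫ t, N t a b ∂μ) := by
  simp only [funext fun t => linearMap_apply_eq_sum L (N t), linearMap_apply_eq_sum L (of _),
    of_apply]
  rw [integral_finsetSum _ fun a _ => integrable_finsetSum _ fun b _ => (hN a b).mul_const _]
  refine Finset.sum_congr rfl fun a _ => ?_
  rw [integral_finsetSum _ fun b _ => (hN a b).mul_const _]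
  simp only [integral_mul_const]

lemma integrable_linearMap_apply {n n' : Type*} (L : Matrix m m' 𝕜 →ₗ[𝕜] Matrix n n' 𝕜)
    {N : α → Matrix m m' 𝕜} (hN : ∀ a b, Integrable (fun t => N t a b) μ) (i : n) (k : n') :
    Integrable (fun t => L (N t) i k) μ :=
  integrable_linearMap (entryLinearMap 𝕜 𝕜 i k ∘ₗ L) hN

lemma integral_linearMap_apply {n n' : Type*} (L : Matrix m m' 𝕜 →ₗ[𝕜] Matrix n n' 𝕜)
    {N : α → Matrix m m' 𝕜} (hN : ∀ a b, Integrable (fun t => N t a b) μ) :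
    (of fun i k => ∫ t, L (N t) i k ∂μ) = L (of fun a b => ∫ t, N t a b ∂μ) := by
  ext i k
  exact integral_linearMap (entryLinearMap 𝕜 𝕜 i k ∘ₗ L) hN

lemma posSemidef_of_integral {C : α → Matrix m m 𝕜} (hC : ∀ t, (C t).PosSemidef)
    (hint : ∀ a b, Integrable (fun t => C t a b) μ) :
    (of fun a b => ∫ t, C t a b ∂μ).PosSemidef := by
  refine posSemidef_iff_dotProduct_mulVec.mpr ⟨?_, fun x => ?_⟩
  · ext a b
    simp only [conjTranspose_apply, of_apply, RCLike.star_def, ← integral_conj]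
    congr 1 with t
    exact congrFun₂ (hC t).1 a b
  · let Q : Matrix m m 𝕜 →ₗ[𝕜] 𝕜 :=
      { toFun := fun M => star x ⬝ᵥ (M *ᵥ x)
        map_add' := fun M M' => by simp only [add_mulVec, dotProduct_add]
        map_smul' := fun c M => by simp only [smul_mulVec, dotProduct_smul, RingHom.id_apply] }
    change 0 ≤ Q _
    rw [← integral_linearMap Q hint]
    exact integral_nonneg fun t => (hC t).dotProduct_mulVec_nonneg x

/-- Complete positivity of `X ↦ ∫ W t * X * (W t)ᴴ ∂μ`, with `B` read as a `k × k` block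
matrix. -/
lemma posSemidef_of_integral_mul_mul_conjTranspose {k : Type*} [Fintype k] [DecidableEq k]
    {W : α → Matrix m m 𝕜} {B : Matrix (m × k) (m × k) 𝕜} (hB : B.PosSemidef)
    (hint : ∀ p q : m × k,
      Integrable (fun t => (W t * (of fun i j => B (i, p.2) (j, q.2)) * (W t)ᴴ) p.1 q.1) μ) :
    (of fun p q : m × k =>
      ∫ t, (W t * (of fun i j => B (i, p.2) (j, q.2)) * (W t)ᴴ) p.1 q.1 ∂μ).PosSemidef := by
  simp only [← kronecker_one_mul_mul_conjTranspose_apply] at hint ⊢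
  exact posSemidef_of_integral (fun t => hB.mul_mul_conjTranspose_same _) hint

end EntrywiseIntegral

end Matrix

noncomputable def rpowKernel (x y : ℝ) : ℝ := ∫ s in (0:ℝ)..1, x ^ (1 - s) * y ^ s

noncomputable def resolventKernel (x y : ℝ) : ℝ := ∫ t in Ioi (0:ℝ), (t + x)⁻¹ * (t + y)⁻¹

section Kernels

variable {x y : ℝ}

lemma rpowKernel_self (hx : 0 < x) : rpowKernel x x = x := by
  simp [rpowKernel, ← rpow_add hx]

lemma rpowKernel_of_ne (hx : 0 < x) (hy : 0 < y) (hxy : x ≠ y) :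
    rpowKernel x y = (y - x) / (log y - log x) := by
  have hL : log y - log x ≠ 0 := sub_ne_zero.mpr fun h => hxy (log_injOn_pos hy hx h).symm
  have h : ∀ s : ℝ, x ^ (1 - s) * y ^ s = x * exp ((log y - log x) * s) := fun s => by
    rw [rpow_def_of_pos hx, rpow_def_of_pos hy, ← exp_add, ← exp_log hx, ← exp_add, log_exp]
    congr 1; ring
  simp only [rpowKernel, h, intervalIntegral.integral_const_mul,
    intervalIntegral.integral_comp_mul_left exp hL, integral_exp, mul_zero, exp_zero, mul_one,
    exp_sub, exp_log hx, exp_log hy, smul_eq_mul]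
  field_simp

lemma hasDerivAt_log_add_sub_log_add (hx : 0 < x) (hy : 0 < y) (hxy : x ≠ y) {t : ℝ}
    (ht : 0 ≤ t) :
    HasDerivAt (fun t => (log (t + x) - log (t + y)) / (y - x)) ((t + x)⁻¹ * (t + y)⁻¹) t := by
  have hx' : t + x ≠ 0 := by positivity
  have hy' : t + y ≠ 0 := by positivity
  refine ((((hasDerivAt_id' t).add_const x).log hx').sub
    (((hasDerivAt_id' t).add_const y).log hy')).div_const (y - x) |>.congr_deriv ?_
  field_simp [sub_ne_zero.mpr hxy.symm]
  ring

lemma tendsto_log_add_sub_log_add :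
    Tendsto (fun t => (log (t + x) - log (t + y)) / (y - x)) atTop (nhds 0) := by
  have h := (tendsto_log_comp_add_sub_log x).sub (tendsto_log_comp_add_sub_log y)
  simpa using h.div_const (y - x)

lemma hasDerivAt_neg_inv_add (hx : 0 < x) {t : ℝ} (ht : 0 ≤ t) :
    HasDerivAt (fun t => -(t + x)⁻¹) ((t + x)⁻¹ * (t + x)⁻¹) t := by
  refine (((hasDerivAt_id' t).add_const x).inv (by positivity)).neg.congr_deriv ?_
  field_simp

lemma tendsto_neg_inv_add : Tendsto (fun t => -(t + x)⁻¹) atTop (nhds 0) := by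
  simpa using (tendsto_inv_atTop_zero.comp (tendsto_atTop_add_const_right _ x tendsto_id)).neg

lemma integrableOn_inv_add_mul_inv_add (hx : 0 < x) (hy : 0 < y) :
    IntegrableOn (fun t => (t + x)⁻¹ * (t + y)⁻¹) (Ioi 0) := by
  have hpos : ∀ t ∈ Ioi (0:ℝ), 0 ≤ (t + x)⁻¹ * (t + y)⁻¹ := fun t ht => by
    have := ht.out; positivity
  rcases eq_or_ne x y with rfl | hxy
  · exact integrableOn_Ioi_deriv_of_nonneg' (fun t ht => hasDerivAt_neg_inv_add hx ht.out) hpos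
      tendsto_neg_inv_add
  · exact integrableOn_Ioi_deriv_of_nonneg'
      (fun t ht => hasDerivAt_log_add_sub_log_add hx hy hxy ht.out) hpos
      tendsto_log_add_sub_log_add

lemma resolventKernel_self (hx : 0 < x) : resolventKernel x x = x⁻¹ := by
  rw [resolventKernel, integral_Ioi_of_hasDerivAt_of_nonneg'
    (fun t ht => hasDerivAt_neg_inv_add hx ht.out) (fun t ht => by have := ht.out; positivity)
    tendsto_neg_inv_add]
  simp

lemma resolventKernel_of_ne (hx : 0 < x) (hy : 0 < y) (hxy : x ≠ y) :
    resolventKernel x y = (log y - log x) / (y - x) := by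
  rw [resolventKernel, integral_Ioi_of_hasDerivAt_of_nonneg'
    (fun t ht => hasDerivAt_log_add_sub_log_add hx hy hxy ht.out)
    (fun t ht => by have := ht.out; positivity) tendsto_log_add_sub_log_add]
  simp only [zero_add]
  ring

lemma rpowKernel_mul_resolventKernel (hx : 0 < x) (hy : 0 < y) :
    rpowKernel x y * resolventKernel x y = 1 := by
  rcases eq_or_ne x y with rfl | hxy
  · rw [rpowKernel_self hx, resolventKernel_self hx, mul_inv_cancel₀ hx.ne']
  · have hL : log y - log x ≠ 0 := sub_ne_zero.mpr fun h => hxy (log_injOn_pos hy hx h).symm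
    rw [rpowKernel_of_ne hx hy hxy, resolventKernel_of_ne hx hy hxy]
    field_simp [sub_ne_zero.mpr hxy.symm]

end Kernels

namespace Matrix.IsHermitian

variable {ι : Type*} [Fintype ι] [DecidableEq ι] {A : Matrix ι ι ℂ} (hA : A.IsHermitian)

/-- Multiplies the `(i, j)` entry of `X`, written in an eigenbasis of `A`, by `K λᵢ λⱼ`: the double
operator integral of `K` with respect to `A`. -/
noncomputable def schurMultiplier (K : ℝ → ℝ → ℝ) (X : Matrix ι ι ℂ) : Matrix ι ι ℂ :=
  conjStarAlgAut ℂ _ hA.eigenvectorUnitary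
    ((of fun i j => (K (hA.eigenvalues i) (hA.eigenvalues j) : ℂ)) ⊙
      (conjStarAlgAut ℂ _ hA.eigenvectorUnitary).symm X)

lemma schurMultiplier_schurMultiplier (K K' : ℝ → ℝ → ℝ) (X : Matrix ι ι ℂ) :
    hA.schurMultiplier K (hA.schurMultiplier K' X) =
      hA.schurMultiplier (fun x y => K x y * K' x y) X := by
  simp only [schurMultiplier, StarAlgEquiv.symm_apply_apply, ← hadamard_assoc]
  congr 2
  ext i j
  simp [hadamard_apply]

lemma schurMultiplier_of_forall_eq_one {K : ℝ → ℝ → ℝ}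
    (hK : ∀ i j, K (hA.eigenvalues i) (hA.eigenvalues j) = 1) (X : Matrix ι ι ℂ) :
    hA.schurMultiplier K X = X := by
  have h1 : (of fun i j => (K (hA.eigenvalues i) (hA.eigenvalues j) : ℂ)) = of fun _ _ => 1 := by
    ext i j; simp [hK]
  have h2 (Y : Matrix ι ι ℂ) : (of fun _ _ => (1 : ℂ)) ⊙ Y = Y := by ext; simp [hadamard_apply]
  rw [schurMultiplier, h1, h2, StarAlgEquiv.apply_symm_apply]

lemma schurMultiplier_one (K : ℝ → ℝ → ℝ) :
    hA.schurMultiplier K 1 = cfc (fun x => K x x) A := by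
  rw [hA.cfc_eq, IsHermitian.cfc, schurMultiplier, map_one, hadamard_one]
  rfl

lemma cfc_mul_mul_cfc_s16 (f g : ℝ → ℝ) (X : Matrix ι ι ℂ) :
    cfc f A * X * cfc g A = hA.schurMultiplier (fun x y => f x * g y) X := by
  rw [hA.cfc_eq, hA.cfc_eq, IsHermitian.cfc, IsHermitian.cfc, schurMultiplier]
  conv_lhs => rw [← (conjStarAlgAut ℂ _ hA.eigenvectorUnitary).apply_symm_apply X]
  rw [← map_mul, ← map_mul]
  congr 1
  ext i j
  simp only [conjStarAlgAut_symm, conjStarAlgAut_apply, coe_star, star_star, mul_diagonal,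
    diagonal_mul, Function.comp_apply, Complex.ofReal_mul, hadamard_apply, of_apply]
  exact mul_right_comm _ _ _

lemma exists_linearMap_schurMultiplier (X : Matrix ι ι ℂ) :
    ∃ L : Matrix ι ι ℂ →ₗ[ℂ] Matrix ι ι ℂ, ∀ K : ℝ → ℝ → ℝ,
      hA.schurMultiplier K X = L (of fun i j => (K (hA.eigenvalues i) (hA.eigenvalues j) : ℂ)) :=
  ⟨(conjStarAlgAut ℂ _ hA.eigenvectorUnitary).toAlgEquiv.toLinearMap ∘ₗ
    { toFun := fun K => K ⊙ (conjStarAlgAut ℂ _ hA.eigenvectorUnitary).symm X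
      map_add' := fun _ _ => add_hadamard _ _ _
      map_smul' := fun _ _ => smul_hadamard _ _ _ }, fun _ => rfl⟩

variable {α : Type*} [MeasurableSpace α] {μ : Measure α} {F : α → ℝ → ℝ → ℝ}

lemma integrable_schurMultiplier_apply
    (hF : ∀ i j, Integrable (fun t => F t (hA.eigenvalues i) (hA.eigenvalues j)) μ)
    (X : Matrix ι ι ℂ) (i k : ι) : Integrable (fun t => hA.schurMultiplier (F t) X i k) μ := by
  obtain ⟨L, hL⟩ := hA.exists_linearMap_schurMultiplier X
  simp only [hL]
  exact integrable_linearMap_apply L (fun a b => (hF a b).ofReal) i k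

lemma integral_schurMultiplier_apply
    (hF : ∀ i j, Integrable (fun t => F t (hA.eigenvalues i) (hA.eigenvalues j)) μ)
    (X : Matrix ι ι ℂ) :
    (of fun i k => ∫ t, hA.schurMultiplier (F t) X i k ∂μ) =
      hA.schurMultiplier (fun x y => ∫ t, F t x y ∂μ) X := by
  obtain ⟨L, hL⟩ := hA.exists_linearMap_schurMultiplier X
  simp only [hL]
  rw [integral_linearMap_apply L
    (N := fun t => of fun i j => (F t (hA.eigenvalues i) (hA.eigenvalues j) : ℂ))
    fun a b => (hF a b).ofReal]
  congr 1 with a b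
  exact integral_complex_ofReal

end Matrix.IsHermitian

namespace Matrix.PosDef

variable {ι : Type*} [Fintype ι] [DecidableEq ι] {A : Matrix ι ι ℂ}

lemma pos_of_mem_spectrum (hA : A.PosDef) {x : ℝ} (hx : x ∈ spectrum ℝ A) : 0 < x := by
  obtain ⟨i, rfl⟩ := hA.1.spectrum_real_eq_range_eigenvalues ▸ hx
  exact hA.eigenvalues_pos i

lemma inv_smul_one_add_eq_cfc (hA : A.PosDef) {t : ℝ} (ht : 0 ≤ t) :
    ((t : ℂ) • (1 : Matrix ι ι ℂ) + A)⁻¹ = cfc (fun x => (t + x)⁻¹) A := by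
  have hA' : IsSelfAdjoint A := hA.1
  rw [cfc_inv (fun x => t + x) A fun x hx => (add_pos_of_nonneg_of_pos ht
      (hA.pos_of_mem_spectrum hx)).ne', cfc_const_add t (fun x => x) A, cfc_id' ℝ A,
    nonsing_inv_eq_ringInverse, Algebra.algebraMap_eq_smul_one (A := Matrix ι ι ℂ) t,
    Complex.coe_smul]

lemma of_intervalIntegral_cfc_rpow_mul_mul_cfc_rpow_s16 (hA : A.PosDef) (X : Matrix ι ι ℂ) :
    (of fun i k => ∫ s in (0:ℝ)..1,
        (cfc (fun x : ℝ => x ^ (1 - s)) A * X * cfc (fun x : ℝ => x ^ s) A) i k) =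
      hA.1.schurMultiplier rpowKernel X := by
  have hint (i j : ι) : IntegrableOn
      (fun s : ℝ => hA.1.eigenvalues i ^ (1 - s) * hA.1.eigenvalues j ^ s) (Ioc 0 1) :=
    (((continuous_const_rpow (hA.eigenvalues_pos i).ne').comp (continuous_sub_left 1)).mul
      (continuous_const_rpow (hA.eigenvalues_pos j).ne')).integrableOn_Ioc
  simp only [intervalIntegral.integral_of_le zero_le_one, hA.1.cfc_mul_mul_cfc_s16]
  rw [hA.1.integral_schurMultiplier_apply (F := fun s x y => x ^ (1 - s) * y ^ s) hint]
  congr with x y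
  exact (intervalIntegral.integral_of_le zero_le_one).symm

lemma inv_smul_one_add_mul_mul_inv_smul_one_add (hA : A.PosDef) {t : ℝ} (ht : 0 ≤ t)
    (X : Matrix ι ι ℂ) :
    ((t : ℂ) • (1 : Matrix ι ι ℂ) + A)⁻¹ * X * ((t : ℂ) • (1 : Matrix ι ι ℂ) + A)⁻¹ =
      hA.1.schurMultiplier (fun x y => (t + x)⁻¹ * (t + y)⁻¹) X := by
  rw [hA.inv_smul_one_add_eq_cfc ht, hA.1.cfc_mul_mul_cfc_s16]

lemma integrableOn_inv_smul_one_add_mul_mul_inv_smul_one_add_apply (hA : A.PosDef)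
    (X : Matrix ι ι ℂ) (i k : ι) :
    IntegrableOn (fun t : ℝ => (((t : ℂ) • (1 : Matrix ι ι ℂ) + A)⁻¹ * X *
      ((t : ℂ) • (1 : Matrix ι ι ℂ) + A)⁻¹) i k) (Ioi 0) :=
  IntegrableOn.congr_fun (hA.1.integrable_schurMultiplier_apply
    (F := fun t x y => (t + x)⁻¹ * (t + y)⁻¹)
    (fun i j => integrableOn_inv_add_mul_inv_add (hA.eigenvalues_pos i) (hA.eigenvalues_pos j))
    X i k)
    (fun t ht => by rw [hA.inv_smul_one_add_mul_mul_inv_smul_one_add ht.out.le]) measurableSet_Ioi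

lemma of_integral_inv_smul_one_add_mul_mul_inv_smul_one_add (hA : A.PosDef) (X : Matrix ι ι ℂ) :
    (of fun i k => ∫ t in Ioi (0:ℝ), (((t : ℂ) • (1 : Matrix ι ι ℂ) + A)⁻¹ * X *
      ((t : ℂ) • (1 : Matrix ι ι ℂ) + A)⁻¹) i k) = hA.1.schurMultiplier resolventKernel X := by
  refine Eq.trans ?_ (hA.1.integral_schurMultiplier_apply
    (F := fun t x y => (t + x)⁻¹ * (t + y)⁻¹)
    (fun i j => integrableOn_inv_add_mul_inv_add (hA.eigenvalues_pos i) (hA.eigenvalues_pos j)) X)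
  ext i k
  exact setIntegral_congr_fun measurableSet_Ioi fun t ht => by
    rw [hA.inv_smul_one_add_mul_mul_inv_smul_one_add ht.out.le]

lemma schurMultiplier_resolventKernel_cfc_sqrt_mul_one_mul_cfc_sqrt (hA : A.PosDef) :
    hA.1.schurMultiplier resolventKernel
      (cfc (fun x : ℝ => x ^ (2:ℝ)⁻¹) A * 1 * cfc (fun x : ℝ => x ^ (2:ℝ)⁻¹) A) = 1 := by
  rw [hA.1.cfc_mul_mul_cfc_s16, hA.1.schurMultiplier_schurMultiplier, hA.1.schurMultiplier_one,
    ← cfc_one ℝ A hA.1.isSelfAdjoint]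
  refine cfc_congr fun x hx => ?_
  have hx := hA.pos_of_mem_spectrum hx
  rw [resolventKernel_self hx, ← rpow_add hx]
  norm_num [hx.ne']

lemma conjTranspose_cfc_mul_inv_smul_one_add (hA : A.PosDef) {t : ℝ} (ht : 0 ≤ t)
    (f : ℝ → ℝ) : (cfc f A * ((t : ℂ) • (1 : Matrix ι ι ℂ) + A)⁻¹)ᴴ =
      ((t : ℂ) • (1 : Matrix ι ι ℂ) + A)⁻¹ * cfc f A := by
  rw [hA.inv_smul_one_add_eq_cfc ht, conjTranspose_mul, ← star_eq_conjTranspose,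
    ← star_eq_conjTranspose, IsSelfAdjoint.cfc.star_eq, IsSelfAdjoint.cfc.star_eq]

lemma inv_smul_one_add_mul_cfc_mul_mul_cfc_mul_inv_smul_one_add (hA : A.PosDef) {t : ℝ}
    (ht : 0 ≤ t) (f : ℝ → ℝ) (X : Matrix ι ι ℂ) :
    ((t : ℂ) • (1 : Matrix ι ι ℂ) + A)⁻¹ * (cfc f A * X * cfc f A) *
        ((t : ℂ) • (1 : Matrix ι ι ℂ) + A)⁻¹ =
      (cfc f A * ((t : ℂ) • (1 : Matrix ι ι ℂ) + A)⁻¹) * X *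
        (cfc f A * ((t : ℂ) • (1 : Matrix ι ι ℂ) + A)⁻¹)ᴴ := by
  have hc : Commute ((t : ℂ) • (1 : Matrix ι ι ℂ) + A)⁻¹ (cfc f A) := by
    rw [hA.inv_smul_one_add_eq_cfc ht]
    exact cfc_commute_cfc _ _ _
  rw [hA.conjTranspose_cfc_mul_inv_smul_one_add ht]
  set R := ((t : ℂ) • (1 : Matrix ι ι ℂ) + A)⁻¹
  calc R * (cfc f A * X * cfc f A) * R = (R * cfc f A) * X * (cfc f A * R) := by
        simp only [mul_assoc]
    _ = (cfc f A * R) * X * (R * cfc f A) := by rw [hc.eq]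

end Matrix.PosDef

theorem stmt_16_general (n : ℕ) (σ : Matrix (Fin n) (Fin n) ℂ) (hσ : σ.PosDef)
    (Mop Minv : Matrix (Fin n) (Fin n) ℂ → Matrix (Fin n) (Fin n) ℂ)
    (hMop : ∀ A, Mop A = Matrix.of fun i k =>
        ∫ s in (0:ℝ)..1,
          (cfc (fun x : ℝ => x ^ (1 - s)) σ * A * cfc (fun x : ℝ => x ^ s) σ) i k)
    (hMinv : ∀ A, Minv A = Matrix.of fun i k =>
        ∫ t in Set.Ioi (0:ℝ),
          (((t : ℂ) • (1 : Matrix (Fin n) (Fin n) ℂ) + σ)⁻¹ * A *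
            ((t : ℂ) • (1 : Matrix (Fin n) (Fin n) ℂ) + σ)⁻¹) i k) :
    (∀ A, Minv (Mop A) = A) ∧ (∀ A, Mop (Minv A) = A) ∧
    -- the integral formula for `A ↦ M⁻¹(σ^{1/2} A σ^{1/2})`
    (∀ A, Minv (cfc (fun x : ℝ => x ^ ((2:ℝ)⁻¹)) σ * A * cfc (fun x : ℝ => x ^ ((2:ℝ)⁻¹)) σ)
        = Matrix.of fun i k =>
            ∫ t in Set.Ioi (0:ℝ),
              ((cfc (fun x : ℝ => x ^ ((2:ℝ)⁻¹)) σ *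
                  ((t : ℂ) • (1 : Matrix (Fin n) (Fin n) ℂ) + σ)⁻¹) * A *
                (((t : ℂ) • (1 : Matrix (Fin n) (Fin n) ℂ) + σ)⁻¹ *
                  cfc (fun x : ℝ => x ^ ((2:ℝ)⁻¹)) σ)) i k) ∧
    -- unitality
    Minv (cfc (fun x : ℝ => x ^ ((2:ℝ)⁻¹)) σ * 1 * cfc (fun x : ℝ => x ^ ((2:ℝ)⁻¹)) σ) = 1 ∧
    -- complete positivity
    (∀ k : ℕ, ∀ B : Matrix (Fin n × Fin k) (Fin n × Fin k) ℂ, B.PosSemidef →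
      (Matrix.of fun p q : Fin n × Fin k =>
        (Minv (cfc (fun x : ℝ => x ^ ((2:ℝ)⁻¹)) σ *
            (Matrix.of fun i j => B (i, p.2) (j, q.2)) *
            cfc (fun x : ℝ => x ^ ((2:ℝ)⁻¹)) σ)) p.1 q.1).PosSemidef) := by
  set S := cfc (fun x : ℝ => x ^ ((2:ℝ)⁻¹)) σ
  set R := fun t : ℝ => ((t : ℂ) • (1 : Matrix (Fin n) (Fin n) ℂ) + σ)⁻¹
  have hMop' (A) : Mop A = hσ.1.schurMultiplier rpowKernel A :=
    (hMop A).trans (hσ.of_intervalIntegral_cfc_rpow_mul_mul_cfc_rpow_s16 A)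
  have hMinv' (A) : Minv A = hσ.1.schurMultiplier resolventKernel A :=
    (hMinv A).trans (hσ.of_integral_inv_smul_one_add_mul_mul_inv_smul_one_add A)
  have hkernel (i j) :=
    rpowKernel_mul_resolventKernel (hσ.eigenvalues_pos i) (hσ.eigenvalues_pos j)
  have hMinvS (A) : Minv (S * A * S) =
      of fun i k => ∫ t in Ioi (0:ℝ), ((S * R t) * A * (S * R t)ᴴ) i k := by
    rw [hMinv]
    ext i k
    exact setIntegral_congr_fun measurableSet_Ioi fun t ht => by
      rw [hσ.inv_smul_one_add_mul_cfc_mul_mul_cfc_mul_inv_smul_one_add ht.out.le]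
  refine ⟨fun A => ?_, fun A => ?_, fun A => ?_, ?_, fun k B hB => ?_⟩
  · rw [hMop', hMinv', hσ.1.schurMultiplier_schurMultiplier]
    exact hσ.1.schurMultiplier_of_forall_eq_one (fun i j => by rw [mul_comm, hkernel]) A
  · rw [hMop', hMinv', hσ.1.schurMultiplier_schurMultiplier]
    exact hσ.1.schurMultiplier_of_forall_eq_one hkernel A
  · rw [hMinvS]
    ext i k
    exact setIntegral_congr_fun measurableSet_Ioi fun t ht => by
      rw [hσ.conjTranspose_cfc_mul_inv_smul_one_add ht.out.le]
  · rw [hMinv']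
    exact hσ.schurMultiplier_resolventKernel_cfc_sqrt_mul_one_mul_cfc_sqrt
  · simp only [hMinvS, of_apply]
    refine posSemidef_of_integral_mul_mul_conjTranspose hB fun p q => IntegrableOn.congr_fun
      (hσ.integrableOn_inv_smul_one_add_mul_mul_inv_smul_one_add_apply
        (S * (of fun i j => B (i, p.2) (j, q.2)) * S) p.1 q.1) (fun t ht => ?_) measurableSet_Ioi
    rw [hσ.inv_smul_one_add_mul_cfc_mul_mul_cfc_mul_inv_smul_one_add ht.out.le]

/-- For a positive definite density matrix `σ`, the map `M(A) = ∫₀¹ σ^{1−s} A σ^s ds` is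
invertible with inverse `M⁻¹(A) = ∫₀^∞ (t+σ)⁻¹ A (t+σ)⁻¹ dt`, and the map
`A ↦ M⁻¹(σ^{1/2} A σ^{1/2}) = ∫₀^∞ (σ^{1/2}/(t+σ)) A (σ^{1/2}/(t+σ)) dt` is completely
positive and unital. -/
theorem stmt_16 (n : ℕ) (σ : Matrix (Fin n) (Fin n) ℂ) (hσ : σ.PosDef) (htr : σ.trace = 1)
    (Mop Minv : Matrix (Fin n) (Fin n) ℂ → Matrix (Fin n) (Fin n) ℂ)
    (hMop : ∀ A, Mop A = Matrix.of fun i k =>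
        ∫ s in (0:ℝ)..1,
          (cfc (fun x : ℝ => x ^ (1 - s)) σ * A * cfc (fun x : ℝ => x ^ s) σ) i k)
    (hMinv : ∀ A, Minv A = Matrix.of fun i k =>
        ∫ t in Set.Ioi (0:ℝ),
          (((t : ℂ) • (1 : Matrix (Fin n) (Fin n) ℂ) + σ)⁻¹ * A *
            ((t : ℂ) • (1 : Matrix (Fin n) (Fin n) ℂ) + σ)⁻¹) i k) :
    (∀ A, Minv (Mop A) = A) ∧ (∀ A, Mop (Minv A) = A) ∧
    -- the integral formula for `A ↦ M⁻¹(σ^{1/2} A σ^{1/2})`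
    (∀ A, Minv (cfc (fun x : ℝ => x ^ ((2:ℝ)⁻¹)) σ * A * cfc (fun x : ℝ => x ^ ((2:ℝ)⁻¹)) σ)
        = Matrix.of fun i k =>
            ∫ t in Set.Ioi (0:ℝ),
              ((cfc (fun x : ℝ => x ^ ((2:ℝ)⁻¹)) σ *
                  ((t : ℂ) • (1 : Matrix (Fin n) (Fin n) ℂ) + σ)⁻¹) * A *
                (((t : ℂ) • (1 : Matrix (Fin n) (Fin n) ℂ) + σ)⁻¹ *
                  cfc (fun x : ℝ => x ^ ((2:ℝ)⁻¹)) σ)) i k) ∧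
    -- unitality
    Minv (cfc (fun x : ℝ => x ^ ((2:ℝ)⁻¹)) σ * 1 * cfc (fun x : ℝ => x ^ ((2:ℝ)⁻¹)) σ) = 1 ∧
    -- complete positivity
    (∀ k : ℕ, ∀ B : Matrix (Fin n × Fin k) (Fin n × Fin k) ℂ, B.PosSemidef →
      (Matrix.of fun p q : Fin n × Fin k =>
        (Minv (cfc (fun x : ℝ => x ^ ((2:ℝ)⁻¹)) σ *
            (Matrix.of fun i j => B (i, p.2) (j, q.2)) *
            cfc (fun x : ℝ => x ^ ((2:ℝ)⁻¹)) σ)) p.1 q.1).PosSemidef) :=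
  stmt_16_general n σ hσ Mop Minv hMop hMinv
end
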